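/- arXiv:2505.01550 — 7 statements merged into one kernel-verified Lean document; each statement's English description precedes it below -/
import Mathlib

section
/- For every integer c ≥ 1 and all integers n ≥ 0 and k ≥ 0, the number of colored Lehmer codes of length n with parameter c whose entries sum to k equals the colored Mahonian number i_c(n,k); that is, |L^{(c)}_{n,k}| = i_c(n,k). -/
/-!
Write `a_j` and `b_j = j - a_j` for the numbers of earlier entries of `π` that are greater,
resp. smaller, than `π(j)` (positions counted from `0`). The colored Lehmer code of `σ = (π, f)`
has entries `ℓ_j = a_j + f(j) + [f(j) ≠ 0]·c·b_j < c(j+1)`, and summing over `j` gives `inv_c σ`.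
The vector `(a_j)` is the ordinary Lehmer code and determines `π`; and `ℓ_j` determines `a_j` and
`f(j)`, since the values with `f(j) = 0` fill `[0, j]` while the others are
`j + f(j) + (c-1)·b_j` with `1 ≤ f(j) ≤ c-1`. So the code map is an injection between two sets of
size `n!·cⁿ`, hence a bijection carrying `inv_c` to the sum of the entries.
-/

open Finset

/-- The inversion number of a permutation of `Fin n`:
`inv(π) = #{(i,j) : i < j, π(i) > π(j)}`. -/
def invNum {n : ℕ} (π : Equiv.Perm (Fin n)) : ℕ :=
  ((Finset.univ : Finset (Fin n × Fin n)).filter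
    (fun p => p.1 < p.2 ∧ π p.2 < π p.1)).card

/-- The colored inversion statistic on a colored permutation `σ = (π, f)`:
`inv_c(σ) = inv(π) + ∑ f(j) + c·#{(i,j) : i < j, π(i) < π(j), f(j) ≠ 0}`. -/
def invC (c : ℕ) {n : ℕ} (σ : Equiv.Perm (Fin n) × (Fin n → Fin c)) : ℕ :=
  invNum σ.1 + (∑ j, (σ.2 j : ℕ)) +
    c * ((Finset.univ : Finset (Fin n × Fin n)).filter
      (fun p => p.1 < p.2 ∧ σ.1 p.1 < σ.1 p.2 ∧ (σ.2 p.2 : ℕ) ≠ 0)).card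

/-- The colored Mahonian number `i_c(n,k)`: the number of colored permutations
of size `n` with exactly `k` colored inversions. -/
noncomputable def mahonianC (c n k : ℕ) : ℕ :=
  Nat.card {σ : Equiv.Perm (Fin n) × (Fin n → Fin c) // invC c σ = k}

/-- The number of colored Lehmer codes `(ℓ_1,…,ℓ_n)` with `0 ≤ ℓ_i < c·i`
and `ℓ_1 + ⋯ + ℓ_n = k`, i.e. `|L^{(c)}_{n,k}|`. -/
noncomputable def lehmerCount (c n k : ℕ) : ℕ :=
  Nat.card {ℓ : Fin n → ℕ // (∀ i : Fin n, ℓ i < c * (i.1 + 1)) ∧ ∑ i, ℓ i = k}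

lemma Finset.strictAntiOn_card_filter_lt {α : Type*} [LinearOrder α] (s : Finset α) :
    StrictAntiOn (fun x => #{y ∈ s | x < y}) s := by
  intro x _ y hy hxy
  refine card_lt_card ⟨monotone_filter_right s fun z _ hz => hxy.trans hz, fun h => ?_⟩
  simpa using (h (mem_filter.2 ⟨hy, hxy⟩) : y ∈ {z ∈ s | y < z})

lemma Finset.card_filter_lt_prod_eq_sum {α : Type*} [Fintype α] [LinearOrder α]
    [LocallyFiniteOrderBot α] (Q : α → α → Prop) [∀ i j, Decidable (Q i j)] :
    #{p : α × α | p.1 < p.2 ∧ Q p.1 p.2} = ∑ j, #{i ∈ Iio j | Q i j} := by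
  rw [card_filter, Fintype.sum_prod_type, sum_comm]
  refine sum_congr rfl fun j _ => ?_
  rw [← card_filter]
  congr 1
  ext i
  simp

namespace Equiv.Perm

variable {n : ℕ}

def invAt (π : Perm (Fin n)) (j : Fin n) : ℕ := #{i ∈ Iio j | π j < π i}

def coinvAt (π : Perm (Fin n)) (j : Fin n) : ℕ := #{i ∈ Iio j | π i < π j}

lemma invAt_add_coinvAt (π : Perm (Fin n)) (j : Fin n) : π.invAt j + π.coinvAt j = j := by
  rw [invAt, coinvAt, ← Fin.card_Iio j,
    ← card_filter_add_card_filter_not (s := Iio j) (fun i => π j < π i)]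
  congr 1
  refine congrArg card (filter_congr fun i hi => ?_)
  have : π i ≠ π j := π.injective.ne (mem_Iio.1 hi).ne
  exact ⟨fun h => not_lt.2 h.le, fun h => lt_of_le_of_ne (not_lt.1 h) this⟩

lemma invNum_eq_sum_invAt (π : Perm (Fin n)) : invNum π = ∑ j, π.invAt j :=
  card_filter_lt_prod_eq_sum fun i j => π j < π i

lemma invAt_eq_card_filter_map (π : Perm (Fin n)) (j : Fin n) :
    π.invAt j = #{v ∈ (Iic j).map π.toEmbedding | π j < v} := by
  rw [filter_map, card_map, invAt]
  congr 1
  ext i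
  simp only [mem_filter, mem_Iio, mem_Iic, Function.comp_apply, toEmbedding_apply]
  exact ⟨fun h => ⟨h.1.le, h.2⟩,
    fun h => ⟨lt_of_le_of_ne h.1 (by rintro rfl; exact lt_irrefl _ h.2), h.2⟩⟩

lemma map_Iic_eq_of_eqOn_Ioi {π π' : Perm (Fin n)} {j : Fin n}
    (h : ∀ i, j < i → π i = π' i) :
    (Iic j).map π.toEmbedding = (Iic j).map π'.toEmbedding := by
  ext v
  simp only [mem_map_equiv, mem_Iic, ← not_lt]
  constructor
  · intro hv hv'
    exact hv (by rwa [π.symm_apply_eq.2 ((h _ hv').trans (π'.apply_symm_apply v)).symm])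
  · intro hv' hv
    exact hv' (by rwa [π'.symm_apply_eq.2 ((h _ hv).symm.trans (π.apply_symm_apply v)).symm])

/-- Going down from the last position: once `π` and `π'` agree after `j`, the values at
positions `≤ j` form the same set, in which `π j` and `π' j` have the same rank `invAt j`. -/
lemma invAt_injective : Function.Injective (invAt (n := n)) := by
  intro π π' h
  ext j : 1
  induction j using WellFoundedGT.induction with
  | _ j ih =>
  have hprefix := map_Iic_eq_of_eqOn_Ioi ih
  have hj := congrFun h j
  rw [invAt_eq_card_filter_map, invAt_eq_card_filter_map, ← hprefix] at hj
  refine (strictAntiOn_card_filter_lt _).injOn ?_ ?_ hj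
  · simp
  · rw [hprefix]; simp

end Equiv.Perm

def coloredCodeEntry (c a b f : ℕ) : ℕ := a + f + if f = 0 then 0 else c * b

lemma coloredCodeEntry_lt {c a b f : ℕ} (hf : f < c) :
    coloredCodeEntry c a b f < c * (a + b + 1) := by
  have ha : a ≤ c * a := Nat.le_mul_of_pos_left a (by omega)
  rw [coloredCodeEntry, mul_add, mul_add, mul_one]
  split_ifs <;> omega

lemma coloredCodeEntry_inj {c a b f a' b' f' : ℕ} (hf : f < c) (hf' : f' < c)
    (hab : a + b = a' + b') (h : coloredCodeEntry c a b f = coloredCodeEntry c a' b' f') :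
    a = a' ∧ f = f' := by
  obtain ⟨d, rfl⟩ : ∃ d, c = d + 1 := ⟨c - 1, by omega⟩
  simp only [coloredCodeEntry, add_one_mul] at h
  split_ifs at h
  · omega
  · omega
  · omega
  · have hd : 0 < d := by omega
    have key : (f - 1) + d * b = (f' - 1) + d * b' := by omega
    have hdiv := (Nat.div_mod_unique hd).2 ⟨key, by omega⟩
    rw [Nat.add_mul_div_left _ _ hd, Nat.add_mul_mod_self_left, Nat.div_eq_of_lt (by omega),
      Nat.mod_eq_of_lt (by omega)] at hdiv
    omega

abbrev ColoredPerm (c n : ℕ) := Equiv.Perm (Fin n) × (Fin n → Fin c)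

abbrev ColoredLehmerCode (c n : ℕ) := ∀ j : Fin n, Fin (c * (j + 1))

section ColoredCode

variable {c n : ℕ}

def coloredCode (σ : ColoredPerm c n) : ColoredLehmerCode c n := fun j =>
  ⟨coloredCodeEntry c (σ.1.invAt j) (σ.1.coinvAt j) (σ.2 j), by
    simpa only [σ.1.invAt_add_coinvAt] using
      coloredCodeEntry_lt (a := σ.1.invAt j) (b := σ.1.coinvAt j) (σ.2 j).2⟩

lemma coloredCode_injective : Function.Injective (coloredCode (c := c) (n := n)) := by
  intro σ σ' h
  have hj : ∀ j, σ.1.invAt j = σ'.1.invAt j ∧ (σ.2 j : ℕ) = σ'.2 j := fun j =>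
    coloredCodeEntry_inj (σ.2 j).2 (σ'.2 j).2
      (by rw [σ.1.invAt_add_coinvAt, σ'.1.invAt_add_coinvAt]) (congrArg Fin.val (congrFun h j))
  exact Prod.ext (Equiv.Perm.invAt_injective (funext fun j => (hj j).1))
    (funext fun j => Fin.ext (hj j).2)

lemma card_coloredPerm_eq_card_coloredLehmerCode :
    Fintype.card (ColoredPerm c n) = Fintype.card (ColoredLehmerCode c n) := by
  simp only [Fintype.card_prod, Fintype.card_perm, Fintype.card_fun, Fintype.card_pi,
    Fintype.card_fin]
  rw [prod_mul_distrib, prod_const, card_univ, Fintype.card_fin,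
    Fin.prod_univ_eq_prod_range (· + 1), prod_range_add_one_eq_factorial, mul_comm]

lemma coloredCode_bijective : Function.Bijective (coloredCode (c := c) (n := n)) :=
  (Fintype.bijective_iff_injective_and_card _).2
    ⟨coloredCode_injective, card_coloredPerm_eq_card_coloredLehmerCode⟩

lemma sum_coloredCode (σ : ColoredPerm c n) : ∑ j, (coloredCode σ j : ℕ) = invC c σ := by
  have hcolored : #{p : Fin n × Fin n | p.1 < p.2 ∧ σ.1 p.1 < σ.1 p.2 ∧ (σ.2 p.2 : ℕ) ≠ 0} =
      ∑ j, if (σ.2 j : ℕ) = 0 then 0 else σ.1.coinvAt j := by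
    rw [card_filter_lt_prod_eq_sum fun i j => σ.1 i < σ.1 j ∧ (σ.2 j : ℕ) ≠ 0]
    refine sum_congr rfl fun j _ => ?_
    split_ifs with h <;> simp [h, Equiv.Perm.coinvAt]
  simp only [coloredCode, coloredCodeEntry, invC, hcolored, σ.1.invNum_eq_sum_invAt,
    sum_add_distrib, mul_sum, mul_ite, mul_zero]

end ColoredCode

lemma lehmerCount_eq_card_sum_eq (c n k : ℕ) :
    lehmerCount c n k = Nat.card {ℓ : ColoredLehmerCode c n // ∑ j, (ℓ j : ℕ) = k} :=
  Nat.card_congr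
    { toFun := fun ℓ => ⟨fun j => ⟨ℓ.1 j, ℓ.2.1 j⟩, ℓ.2.2⟩
      invFun := fun ℓ => ⟨fun j => ℓ.1 j, fun j => (ℓ.1 j).2, ℓ.2⟩ }

theorem lehmerCount_eq_mahonianC_general (c n k : ℕ) :
    lehmerCount c n k = mahonianC c n k := by
  rw [lehmerCount_eq_card_sum_eq, mahonianC]
  exact Nat.card_congr ((Equiv.ofBijective _ coloredCode_bijective).subtypeEquiv
    fun σ => by rw [Equiv.ofBijective_apply, sum_coloredCode]).symm

/-- `|L^{(c)}_{n,k}| = i_c(n,k)`. -/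
theorem lehmerCount_eq_mahonianC (c n k : ℕ) (hc : 1 ≤ c) :
    lehmerCount c n k = mahonianC c n k :=
  lehmerCount_eq_mahonianC_general c n k
end

section
/- (Summation property) For all integers n ≥ 2, c ≥ 1, and k ≥ 0, the colored Mahonian numbers satisfy i_c(n,k) = ∑_{j=0}^{cn−1} i_c(n−1, k−j), where terms with k−j < 0 are interpreted as 0 (equivalently, the sum runs over 0 ≤ j ≤ min(k, cn−1)). -/
open Finset

/-! ### Auxiliary definitions and lemmas -/

/-- Insert the value `v` at the last position of (the extension of) `π`. -/
def insPerm {m : ℕ} (v : Fin (m + 1)) (π : Equiv.Perm (Fin m)) : Equiv.Perm (Fin (m + 1)) :=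
  (finSuccEquiv' (Fin.last m)).trans ((π.optionCongr).trans (finSuccEquiv' v).symm)

lemma insPerm_last {m : ℕ} (v : Fin (m + 1)) (π : Equiv.Perm (Fin m)) :
    insPerm v π (Fin.last m) = v := by
  simp [insPerm, finSuccEquiv'_at, finSuccEquiv'_symm_none]

lemma insPerm_castSucc {m : ℕ} (v : Fin (m + 1)) (π : Equiv.Perm (Fin m)) (i : Fin m) :
    insPerm v π i.castSucc = v.succAbove (π i) := by
  have h : finSuccEquiv' (Fin.last m) i.castSucc = some i := by
    rw [← Fin.succAbove_last, finSuccEquiv'_succAbove]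
  simp [insPerm, h, finSuccEquiv'_symm_some]

/-- The "weight" contributed by inserting value `v` with color `e` at the last position. -/
def gval (c m : ℕ) (v : Fin (m + 1)) (e : Fin c) : ℕ :=
  (m - (v : ℕ)) + (e : ℕ) + (if (e : ℕ) ≠ 0 then c * (v : ℕ) else 0)

lemma sum_pair_split {m : ℕ} (F : Fin (m + 1) → Fin (m + 1) → ℕ)
    (h : ∀ j, F (Fin.last m) j = 0) :
    ∑ p : Fin (m + 1) × Fin (m + 1), F p.1 p.2 =
      (∑ q : Fin m × Fin m, F q.1.castSucc q.2.castSucc) +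
        ∑ i : Fin m, F i.castSucc (Fin.last m) := by
  rw [Fintype.sum_prod_type, Fintype.sum_prod_type]
  rw [Fin.sum_univ_castSucc (f := fun i => ∑ j, F i j)]
  have h2 : ∀ i : Fin m, (∑ j, F i.castSucc j) =
      (∑ j : Fin m, F i.castSucc j.castSucc) + F i.castSucc (Fin.last m) :=
    fun i => Fin.sum_univ_castSucc _
  rw [Finset.sum_congr rfl (fun i _ => h2 i), Finset.sum_add_distrib]
  simp [h]

lemma count_lt {m : ℕ} (v : Fin (m + 1)) :
    (∑ y : Fin m, if (y : ℕ) < (v : ℕ) then 1 else 0) = (v : ℕ) := by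
  rw [Fin.sum_univ_eq_sum_range (fun i => if i < (v : ℕ) then 1 else 0) m,
    ← Finset.card_filter]
  have : (Finset.range m).filter (fun i => i < (v : ℕ)) = Finset.range (v : ℕ) := by
    ext a
    simp only [Finset.mem_filter, Finset.mem_range]
    have := v.is_le
    omega
  rw [this, Finset.card_range]

lemma count_ge {m : ℕ} (v : Fin (m + 1)) :
    (∑ y : Fin m, if (v : ℕ) ≤ (y : ℕ) then 1 else 0) = m - (v : ℕ) := by
  rw [Fin.sum_univ_eq_sum_range (fun i => if (v : ℕ) ≤ i then 1 else 0) m,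
    ← Finset.card_filter]
  have : (Finset.range m).filter (fun i => (v : ℕ) ≤ i) = Finset.Ico (v : ℕ) m := by
    ext a
    simp only [Finset.mem_filter, Finset.mem_range, Finset.mem_Ico]
    omega
  rw [this, Nat.card_Ico]

lemma invNum_ins {m : ℕ} (v : Fin (m + 1)) (π : Equiv.Perm (Fin m)) :
    invNum (insPerm v π) = invNum π + (m - (v : ℕ)) := by
  rw [invNum, invNum, Finset.card_filter, Finset.card_filter]
  refine (sum_pair_split
    (fun i j => if i < j ∧ insPerm v π j < insPerm v π i then 1 else 0)
    (fun j => by simp [Fin.not_lt.mpr (Fin.le_last j)])).trans ?_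
  congr 1
  · apply Finset.sum_congr rfl
    intro q _
    simp [insPerm_castSucc, Fin.castSucc_lt_castSucc_iff, Fin.succAbove_lt_succAbove_iff]
  · have h1 : ∀ i : Fin m,
        (if i.castSucc < Fin.last m ∧ insPerm v π (Fin.last m) < insPerm v π i.castSucc
          then 1 else 0) = if (v : ℕ) ≤ ((π i : Fin m) : ℕ) then 1 else 0 := by
      intro i
      rw [insPerm_last, insPerm_castSucc]
      congr 1
      simp only [eq_iff_iff]
      constructor
      · rintro ⟨-, h⟩
        rw [Fin.lt_succAbove_iff_le_castSucc, Fin.le_def] at h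
        simpa using h
      · intro h
        refine ⟨Fin.castSucc_lt_last i, ?_⟩
        rw [Fin.lt_succAbove_iff_le_castSucc, Fin.le_def]
        simpa using h
    rw [Finset.sum_congr rfl (fun i _ => h1 i)]
    rw [Equiv.sum_comp π (fun y : Fin m => if (v : ℕ) ≤ (y : ℕ) then 1 else 0)]
    exact count_ge v

lemma cTerm_ins {m c : ℕ} (v : Fin (m + 1)) (e : Fin c) (π : Equiv.Perm (Fin m))
    (f : Fin m → Fin c) :
    ((Finset.univ : Finset (Fin (m+1) × Fin (m+1))).filter
      (fun p => p.1 < p.2 ∧ insPerm v π p.1 < insPerm v π p.2 ∧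
        ((Fin.snoc f e : Fin (m+1) → Fin c) p.2 : ℕ) ≠ 0)).card =
    ((Finset.univ : Finset (Fin m × Fin m)).filter
      (fun p => p.1 < p.2 ∧ π p.1 < π p.2 ∧ ((f p.2 : ℕ)) ≠ 0)).card +
      (if (e : ℕ) ≠ 0 then (v : ℕ) else 0) := by
  rw [Finset.card_filter, Finset.card_filter]
  refine (sum_pair_split
    (fun i j => if i < j ∧ insPerm v π i < insPerm v π j ∧
      ((Fin.snoc f e : Fin (m+1) → Fin c) j : ℕ) ≠ 0 then 1 else 0)
    (fun j => by simp [Fin.not_lt.mpr (Fin.le_last j)])).trans ?_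
  congr 1
  · apply Finset.sum_congr rfl
    intro q _
    simp [insPerm_castSucc, Fin.castSucc_lt_castSucc_iff, Fin.succAbove_lt_succAbove_iff,
      Fin.snoc_castSucc]
  · have h1 : ∀ i : Fin m,
        (if i.castSucc < Fin.last m ∧ insPerm v π i.castSucc < insPerm v π (Fin.last m) ∧
          ((Fin.snoc f e : Fin (m+1) → Fin c) (Fin.last m) : ℕ) ≠ 0 then 1 else 0) =
        if ((π i : Fin m) : ℕ) < (v : ℕ) ∧ (e : ℕ) ≠ 0 then 1 else 0 := by
      intro i
      rw [insPerm_last, insPerm_castSucc, Fin.snoc_last]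
      congr 1
      simp only [eq_iff_iff]
      constructor
      · rintro ⟨-, h, he⟩
        rw [Fin.succAbove_lt_iff_castSucc_lt, Fin.lt_def] at h
        exact ⟨by simpa using h, he⟩
      · rintro ⟨h, he⟩
        refine ⟨Fin.castSucc_lt_last i, ?_, he⟩
        rw [Fin.succAbove_lt_iff_castSucc_lt, Fin.lt_def]
        simpa using h
    rw [Finset.sum_congr rfl (fun i _ => h1 i)]
    by_cases he : (e : ℕ) = 0
    · simp [he]
    · have h2 : ∀ i : Fin m,
          (if ((π i : Fin m) : ℕ) < (v : ℕ) ∧ (e : ℕ) ≠ 0 then 1 else 0) =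
          if ((π i : Fin m) : ℕ) < (v : ℕ) then 1 else 0 := by
        intro i; simp [he]
      rw [Finset.sum_congr rfl (fun i _ => h2 i)]
      rw [Equiv.sum_comp π (fun y : Fin m => if (y : ℕ) < (v : ℕ) then 1 else 0)]
      rw [count_lt v]
      simp [he]

lemma invC_ins {m c : ℕ} (v : Fin (m + 1)) (e : Fin c) (π : Equiv.Perm (Fin m))
    (f : Fin m → Fin c) :
    invC c (insPerm v π, Fin.snoc f e) = gval c m v e + invC c (π, f) := by
  have h2 : (∑ j : Fin (m+1), ((Fin.snoc f e : Fin (m+1) → Fin c) j : ℕ)) =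
      (∑ j : Fin m, (f j : ℕ)) + (e : ℕ) := by
    rw [Fin.sum_univ_castSucc]
    simp
  simp only [invC, invNum_ins, h2, cTerm_ins, gval]
  rw [Nat.mul_add, mul_ite, mul_zero]
  generalize invNum π = A
  generalize (∑ j : Fin m, (f j : ℕ)) = B
  generalize (c * ((Finset.univ : Finset (Fin m × Fin m)).filter
      (fun p => p.1 < p.2 ∧ π p.1 < π p.2 ∧ ((f p.2 : ℕ)) ≠ 0)).card) = C
  by_cases he : (e : ℕ) = 0
  · simp only [he, ne_eq, not_true_eq_false, if_false, ite_false, not_false_eq_true]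
    omega
  · simp only [ne_eq, he, not_false_eq_true, if_true, ite_true]
    generalize c * (v : ℕ) = D
    omega

/-- The insertion map on colored permutations. -/
def insFun {m c : ℕ} (x : (Fin (m + 1) × Fin c) × (Equiv.Perm (Fin m) × (Fin m → Fin c))) :
    Equiv.Perm (Fin (m + 1)) × (Fin (m + 1) → Fin c) :=
  (insPerm x.1.1 x.2.1, Fin.snoc x.2.2 x.1.2)

lemma insFun_bijective {m c : ℕ} : Function.Bijective (insFun (m := m) (c := c)) := by
  constructor
  · rintro ⟨⟨v, e⟩, ⟨π, f⟩⟩ ⟨⟨w, d⟩, ⟨ρ, g⟩⟩ h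
    have h1 : insPerm v π = insPerm w ρ := congrArg Prod.fst h
    have h2 : (Fin.snoc f e : Fin (m+1) → Fin c) = Fin.snoc g d := congrArg Prod.snd h
    have hv : v = w := by
      have := congrArg (fun σ : Equiv.Perm (Fin (m+1)) => σ (Fin.last m)) h1
      simpa [insPerm_last] using this
    subst hv
    have hpi : π = ρ := by
      ext i
      have := congrArg (fun σ : Equiv.Perm (Fin (m+1)) => σ i.castSucc) h1
      simp only [insPerm_castSucc] at this
      exact congrArg Fin.val (Fin.succAbove_right_injective (p := v) this)
    have he : e = d := by
      have := congrArg (fun f : Fin (m+1) → Fin c => f (Fin.last m)) h2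
      simpa using this
    have hf : f = g := by
      funext i
      have := congrArg (fun f : Fin (m+1) → Fin c => f i.castSucc) h2
      simpa using this
    simp [hpi, he, hf]
  · rintro ⟨π, f⟩
    set v := π (Fin.last m) with hvdef
    set O : Option (Fin m) ≃ Option (Fin m) :=
      (finSuccEquiv' (Fin.last m)).symm.trans (π.trans (finSuccEquiv' v)) with hO
    refine ⟨⟨⟨v, f (Fin.last m)⟩, ⟨O.removeNone, Fin.init f⟩⟩, ?_⟩
    have hperm : insPerm v O.removeNone = π := by
      ext i
      refine Fin.lastCases ?_ ?_ i
      · rw [insPerm_last]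
      · intro j
        rw [insPerm_castSucc]
        obtain ⟨y, hy⟩ := Fin.exists_succAbove_eq
          (show π j.castSucc ≠ v from fun hcontra =>
            (Fin.castSucc_lt_last j).ne (π.injective hcontra))
        have hsome : O (some j) = some y := by
          simp only [hO, Equiv.trans_apply, finSuccEquiv'_symm_some, Fin.succAbove_last]
          rw [← hy, finSuccEquiv'_succAbove]
        have h := Equiv.removeNone_some O ⟨y, hsome⟩
        rw [hsome] at h
        have : O.removeNone j = y := Option.some_injective _ h
        rw [this, hy]
    have hcol : (Fin.snoc (Fin.init f) (f (Fin.last m)) : Fin (m+1) → Fin c) = f :=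
      Fin.snoc_init_self f
    simp only [insFun]
    rw [hperm, hcol]

lemma gval_lt {m c : ℕ} (hc : 1 ≤ c) (v : Fin (m + 1)) (e : Fin c) :
    gval c m v e < c * (m + 1) := by
  obtain ⟨c', rfl⟩ : ∃ c', c = c' + 1 := ⟨c - 1, by omega⟩
  have hv : (v : ℕ) ≤ m := v.is_le
  have he : (e : ℕ) ≤ c' := by have := e.is_lt; omega
  have hmul : c' * (v : ℕ) ≤ c' * m := Nat.mul_le_mul_left c' hv
  unfold gval
  have h1 : (c' + 1) * (v : ℕ) = c' * (v : ℕ) + (v : ℕ) := by ring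
  have h2 : (c' + 1) * (m + 1) = c' * m + c' + m + 1 := by ring
  by_cases h : (e : ℕ) = 0
  · simp only [h, ne_eq, not_true_eq_false, ite_false, if_false]
    omega
  · simp only [ne_eq, h, not_false_eq_true, ite_true, if_true]
    omega

lemma gval_inj {m c : ℕ} (hc : 1 ≤ c) :
    Function.Injective (fun p : Fin (m + 1) × Fin c => gval c m p.1 p.2) := by
  obtain ⟨c', rfl⟩ : ∃ c', c = c' + 1 := ⟨c - 1, by omega⟩
  rintro ⟨v, e⟩ ⟨w, d⟩ h
  simp only [gval] at h
  have hv : (v : ℕ) ≤ m := v.is_le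
  have hw : (w : ℕ) ≤ m := w.is_le
  have he : (e : ℕ) ≤ c' := by have := e.is_lt; omega
  have hd : (d : ℕ) ≤ c' := by have := d.is_lt; omega
  have hmulv : (c' + 1) * (v : ℕ) = c' * (v : ℕ) + (v : ℕ) := by ring
  have hmulw : (c' + 1) * (w : ℕ) = c' * (w : ℕ) + (w : ℕ) := by ring
  have key : (v : ℕ) = (w : ℕ) ∧ (e : ℕ) = (d : ℕ) := by
    by_cases he0 : (e : ℕ) = 0 <;> by_cases hd0 : (d : ℕ) = 0
    · simp [he0, hd0] at h
      exact ⟨by omega, by omega⟩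
    · exfalso
      simp [he0, hd0] at h
      rw [hmulw] at h
      omega
    · exfalso
      simp [he0, hd0] at h
      rw [hmulv] at h
      omega
    · simp [he0, hd0] at h
      rw [hmulv, hmulw] at h
      have hq : c' * (v : ℕ) + (e : ℕ) = c' * (w : ℕ) + (d : ℕ) := by omega
      have hvw : (v : ℕ) = (w : ℕ) := by
        rcases lt_trichotomy (v : ℕ) (w : ℕ) with hlt | heq | hgt
        · have hle : c' * ((v : ℕ) + 1) ≤ c' * (w : ℕ) := Nat.mul_le_mul_left c' hlt
          have h1 : c' * ((v : ℕ) + 1) = c' * (v : ℕ) + c' := by ring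
          omega
        · exact heq
        · have hle : c' * ((w : ℕ) + 1) ≤ c' * (v : ℕ) := Nat.mul_le_mul_left c' hgt
          have h1 : c' * ((w : ℕ) + 1) = c' * (w : ℕ) + c' := by ring
          omega
      refine ⟨hvw, ?_⟩
      rw [hvw] at hq
      omega
  exact Prod.ext (Fin.ext key.1) (Fin.ext key.2)

lemma mahonianC_eq_sum (c n k : ℕ) :
    mahonianC c n k =
      ∑ τ : Equiv.Perm (Fin n) × (Fin n → Fin c), if invC c τ = k then 1 else 0 := by
  rw [mahonianC, Nat.card_eq_fintype_card, Fintype.card_subtype, Finset.card_filter]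

/-- Summation property: `i_c(n,k) = ∑_{j=0}^{cn−1} i_c(n−1, k−j)`,
where terms with `k − j < 0` are interpreted as `0`. -/
theorem mahonianC_sum (c n k : ℕ) (hc : 1 ≤ c) (hn : 2 ≤ n) :
    mahonianC c n k =
      ∑ j ∈ Finset.range (c * n), if j ≤ k then mahonianC c (n - 1) (k - j) else 0 := by
  obtain ⟨m, rfl⟩ : ∃ m, n = m + 1 := ⟨n - 1, by omega⟩
  simp only [Nat.add_sub_cancel]
  have step1 : mahonianC c (m + 1) k =
      ∑ p : Fin (m + 1) × Fin c,
        if gval c m p.1 p.2 ≤ k then mahonianC c m (k - gval c m p.1 p.2) else 0 := by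
    rw [mahonianC_eq_sum]
    rw [← Fintype.sum_bijective insFun insFun_bijective _
      (fun σ => if invC c σ = k then 1 else 0) (fun x => rfl)]
    rw [Fintype.sum_prod_type]
    apply Finset.sum_congr rfl
    rintro ⟨v, e⟩ -
    have hins : ∀ τ : Equiv.Perm (Fin m) × (Fin m → Fin c),
        invC c (insFun ((v, e), τ)) = gval c m v e + invC c τ := by
      rintro ⟨π, f⟩
      exact invC_ins v e π f
    by_cases hle : gval c m v e ≤ k
    · rw [if_pos hle, mahonianC_eq_sum]
      apply Finset.sum_congr rfl
      intro τ _
      dsimp only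
      rw [hins τ]
      congr 1
      simp only [eq_iff_iff]
      omega
    · rw [if_neg hle]
      apply Finset.sum_eq_zero
      intro τ _
      rw [hins τ, if_neg (by omega)]
  rw [step1]
  have himg : Finset.image (fun p : Fin (m + 1) × Fin c => gval c m p.1 p.2) Finset.univ =
      Finset.range (c * (m + 1)) := by
    apply Finset.eq_of_subset_of_card_le
    · intro j hj
      obtain ⟨p, -, rfl⟩ := Finset.mem_image.mp hj
      exact Finset.mem_range.mpr (gval_lt hc p.1 p.2)
    · rw [Finset.card_range,
        Finset.card_image_of_injective _ (gval_inj hc)]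
      simp [Fintype.card_prod, mul_comm]
  rw [← himg, Finset.sum_image (fun x _ y _ h => gval_inj hc h)]
end

section
/- For all integers c ≥ 1, n ≥ 0, and 0 ≤ k ≤ (c−1)·n + c·C(n,2), the colored Mahonian number satisfies i_c(n,k) = ∑_{j=0}^{k} i(n,j) · p_{≤n, c−1}(k−j), where i(n,j) is the classical Mahonian number and p_{≤n, c−1}(m) is the number of partitions of m into parts of size at most n in which each part size occurs at most c−1 times. -/
open Finset

/-- The classical Mahonian number `i(n,k)`: the number of permutations of
`{1,…,n}` with exactly `k` inversions. -/
noncomputable def mahonian (n k : ℕ) : ℕ :=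
  Nat.card {π : Equiv.Perm (Fin n) // invNum π = k}

/-- `p_{≤ n, r}(m)`: the number of integer partitions of `m` into parts of size
at most `n` in which each part appears at most `r` times. -/
noncomputable def pLe (n r m : ℕ) : ℕ :=
  Nat.card {p : Nat.Partition m // (∀ a ∈ p.parts, a ≤ n) ∧ ∀ a, p.parts.count a ≤ r}

/-!
Encode a permutation by its Lehmer code `a`, where `a j ≤ j` counts the larger entries to the left
of position `j`; then `inv π = ∑ a j`, and `inv_c` is a sum over positions of
`a j + [t j ≠ 0] (t j + c (j - a j))`, `t j` being the colour at `j`. For fixed `j` this weight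
takes every value in `[0, c (j + 1))` exactly once as `(a j, t j)` ranges over `[0, j] × [0, c)`.
Writing the weight in mixed radix as `a' + (j + 1) s` with `a' ≤ j`, `s < c` therefore gives a
weight-preserving bijection between coloured permutations and pairs (Lehmer code `a'`,
multiplicity vector `s`); here `∑ (j + 1) s j` is the size of the partition having `s j` parts
equal to `j + 1`. Counting pairs of total weight `k` is then a convolution.
-/
def lehmerCode {n : ℕ} (π : Equiv.Perm (Fin n)) (j : Fin n) : Fin (j + 1) :=
  ⟨#{i | i < j ∧ π j < π i}, Nat.lt_succ_of_le <|
    (card_le_card fun _ hi => mem_Iio.2 (mem_filter.1 hi).2.1).trans (Fin.card_Iio j).le⟩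

theorem invNum_eq_sum_lehmerCode {n : ℕ} (π : Equiv.Perm (Fin n)) :
    invNum π = ∑ j, (lehmerCode π j : ℕ) := by
  simp only [invNum, lehmerCode, card_filter, Fintype.sum_prod_type_right]

theorem lehmerCode_add_card_lt {n : ℕ} (π : Equiv.Perm (Fin n)) (j : Fin n) :
    (lehmerCode π j : ℕ) + #{i | i < j ∧ π i < π j} = j := by
  conv_rhs =>
    rw [← Fin.card_Iio j, ← card_filter_add_card_filter_not (s := Iio j) (fun i => π j < π i)]
  simp only [lehmerCode]
  congr 2 <;> ext i <;> simp only [mem_filter, mem_Iio, mem_univ, true_and]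
  exact and_congr_right fun (hij : i < j) =>
    ⟨lt_asymm, fun h => (not_lt.1 h).lt_of_ne (π.injective.ne hij.ne)⟩

theorem eq_of_card_filter_lt_eq {α : Type*} [LinearOrder α] {s : Finset α} {a b : α}
    (ha : a ∈ s) (hb : b ∈ s) (h : #{x ∈ s | a < x} = #{x ∈ s | b < x}) : a = b := by
  by_contra hne
  wlog hab : a < b generalizing a b
  · exact this hb ha h.symm (Ne.symm hne) ((not_lt.1 hab).lt_of_ne (Ne.symm hne))
  refine (card_lt_card ?_).ne' h
  refine (ssubset_iff_of_subset fun x hx => ?_).2 ⟨b, ?_, ?_⟩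
  · simp only [mem_filter] at hx ⊢; exact ⟨hx.1, hab.trans hx.2⟩
  · simp [hb, hab]
  · simp

theorem lehmerCode_eq_card {n : ℕ} (π : Equiv.Perm (Fin n)) (j : Fin n) :
    (lehmerCode π j : ℕ) = #{x ∈ {x | π.symm x ≤ j} | π j < x} := by
  refine (card_bij' (s := {i | i < j ∧ π j < π i}) (fun i _ => π i) (fun x _ => π.symm x)
    ?_ ?_ ?_ ?_ : _ = _) <;> simp
  · exact fun i hij h => ⟨hij.le, h⟩
  · intro x hxj h
    exact ⟨hxj.lt_of_ne fun e => h.ne (by rw [← e, π.apply_symm_apply]), by simpa using h⟩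

theorem lehmerCode_injective {n : ℕ} : Function.Injective (lehmerCode (n := n)) := by
  intro π π' h
  by_contra hne
  have hdiff : (univ.filter fun j => π j ≠ π' j).Nonempty :=
    let ⟨j, hj⟩ := not_forall.1 (mt Equiv.ext hne); ⟨j, by simpa using hj⟩
  obtain ⟨j, hj, hmax⟩ := exists_max_image _ id hdiff
  simp only [mem_filter, mem_univ, true_and, id] at hj hmax
  -- `j` is the last position where `π` and `π'` differ, so both put the same values in the
  -- positions `≤ j`; among these, the Lehmer code at `j` ranks the value at `j` from above
  have hagree : ∀ i, j < i → π i = π' i := fun i hi => by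
    by_contra hi'; exact (hmax i hi').not_gt hi
  have hsymm : ∀ {ρ ρ' : Equiv.Perm (Fin n)}, (∀ i, j < i → ρ i = ρ' i) →
      ∀ x, j < ρ.symm x → ρ'.symm x = ρ.symm x := fun {ρ ρ'} hag x hx =>
    (Equiv.symm_apply_eq ρ').2 (by rw [← hag _ hx, Equiv.apply_symm_apply])
  have hS : ∀ x, π.symm x ≤ j ↔ π'.symm x ≤ j := fun x => by
    rw [← not_lt, ← not_lt, not_iff_not]
    exact ⟨fun hx => hsymm hagree x hx ▸ hx,
      fun hx => hsymm (fun i hi => (hagree i hi).symm) x hx ▸ hx⟩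
  refine hj (eq_of_card_filter_lt_eq (s := {x | π.symm x ≤ j}) ?_ ?_ ?_)
  · simp
  · simp [hS]
  · rw [← lehmerCode_eq_card, congrFun h j, lehmerCode_eq_card]
    simp only [hS]

noncomputable def lehmerEquiv (n : ℕ) : Equiv.Perm (Fin n) ≃ ∀ j : Fin n, Fin (j + 1) :=
  Equiv.ofBijective lehmerCode <| (Fintype.bijective_iff_injective_and_card _).2
    ⟨lehmerCode_injective, by
      simp [Fintype.card_perm, Fin.prod_univ_eq_prod_range (· + 1),
        prod_range_add_one_eq_factorial]⟩

def coloredWeight (c j : ℕ) (x : Fin (j + 1) × Fin c) : ℕ :=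
  x.1 + if (x.2 : ℕ) = 0 then 0 else x.2 + c * (j - x.1)

theorem invC_eq_sum_coloredWeight {c n : ℕ} (π : Equiv.Perm (Fin n)) (f : Fin n → Fin c) :
    invC c (π, f) = ∑ j : Fin n, coloredWeight c j (lehmerCode π j, f j) := by
  simp only [invC, invNum_eq_sum_lehmerCode, card_filter, Fintype.sum_prod_type_right]
  rw [mul_sum, ← sum_add_distrib, ← sum_add_distrib]
  refine sum_congr rfl fun j _ => ?_
  by_cases hj : (f j : ℕ) = 0
  · simp [coloredWeight, hj]
  · have hcard : #{i | i < j ∧ π i < π j} = j - lehmerCode π j := by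
      have := lehmerCode_add_card_lt π j
      omega
    simp only [coloredWeight, hj, ne_eq, not_false_eq_true, and_true, if_false, ← card_filter,
      hcard]
    ring

theorem coloredWeight_injective (c j : ℕ) : Function.Injective (coloredWeight c j) := by
  rintro ⟨⟨v, hv⟩, ⟨t, ht⟩⟩ ⟨⟨v', hv'⟩, ⟨t', ht'⟩⟩ h
  simp only [coloredWeight, Prod.mk.injEq, Fin.mk.injEq] at h ⊢
  have hu := Nat.sub_add_cancel (Nat.lt_succ_iff.1 hv)
  have hu' := Nat.sub_add_cancel (Nat.lt_succ_iff.1 hv')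
  generalize j - v = u at h hu
  generalize j - v' = u' at h hu'
  split_ifs at h with h1 h2 h2
  · omega
  · nlinarith [Nat.pos_of_ne_zero h2]
  · nlinarith [Nat.pos_of_ne_zero h1]
  -- `u ≠ u'` would force `|t - t'| = (c - 1) |u - u'| ≥ c - 1`, impossible as `0 < t, t' < c`
  · rcases lt_trichotomy u u' with hlt | rfl | hlt
    · nlinarith [Nat.pos_of_ne_zero h1, Nat.pos_of_ne_zero h2]
    · omega
    · nlinarith [Nat.pos_of_ne_zero h1, Nat.pos_of_ne_zero h2]

theorem coloredWeight_lt (c j : ℕ) (x : Fin (j + 1) × Fin c) :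
    coloredWeight c j x < c * (j + 1) := by
  obtain ⟨⟨v, hv⟩, ⟨t, ht⟩⟩ := x
  have hu := Nat.sub_add_cancel (Nat.lt_succ_iff.1 hv)
  simp only [coloredWeight]
  generalize j - v = u at hu
  split_ifs <;> nlinarith

noncomputable def coloredWeightDigits (c j : ℕ) : Fin (j + 1) × Fin c ≃ Fin (j + 1) × Fin c :=
  (Equiv.ofBijective
      (fun x => (⟨coloredWeight c j x, coloredWeight_lt c j x⟩ : Fin (c * (j + 1))))
      ((Fintype.bijective_iff_injective_and_card _).2
        ⟨fun _ _ h => coloredWeight_injective c j (Fin.val_eq_of_eq h),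
          by simp [mul_comm]⟩)).trans
    (finProdFinEquiv.symm.trans (Equiv.prodComm _ _))

theorem coloredWeightDigits_fst_add_mul_snd (c j : ℕ) (x : Fin (j + 1) × Fin c) :
    ((coloredWeightDigits c j x).1 : ℕ) + (j + 1) * (coloredWeightDigits c j x).2 =
      coloredWeight c j x := by
  have := congrArg Fin.val (finProdFinEquiv.apply_symm_apply
    (⟨coloredWeight c j x, coloredWeight_lt c j x⟩ : Fin (c * (j + 1))))
  simpa [coloredWeightDigits, finProdFinEquiv] using this

noncomputable def coloredPermEquiv (c n : ℕ) :
    Equiv.Perm (Fin n) × (Fin n → Fin c) ≃ (∀ j : Fin n, Fin (j + 1)) × (Fin n → Fin c) :=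
  ((lehmerEquiv n).prodCongr (Equiv.refl _)).trans <|
    (Equiv.arrowProdEquivProdArrow _ _ _).symm.trans <|
      (Equiv.piCongrRight fun j : Fin n => coloredWeightDigits c j).trans
        (Equiv.arrowProdEquivProdArrow _ _ _)

theorem invC_eq_sum_add_sum_coloredPermEquiv {c n : ℕ}
    (σ : Equiv.Perm (Fin n) × (Fin n → Fin c)) :
    invC c σ = ∑ j, ((coloredPermEquiv c n σ).1 j : ℕ) +
      ∑ j : Fin n, (j + 1) * ((coloredPermEquiv c n σ).2 j : ℕ) := by
  rw [← sum_add_distrib, ← σ.eta, invC_eq_sum_coloredWeight]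
  exact sum_congr rfl fun j _ =>
    (coloredWeightDigits_fst_add_mul_snd c j (lehmerCode σ.1 j, σ.2 j)).symm

theorem mahonian_eq_card (n k : ℕ) :
    mahonian n k = Nat.card {a : ∀ j : Fin n, Fin (j + 1) // ∑ j, (a j : ℕ) = k} :=
  Nat.card_congr <| (lehmerEquiv n).subtypeEquiv fun π => by
    rw [invNum_eq_sum_lehmerCode]; rfl

section Multiplicities

variable {n : ℕ}

def partsOfMultiplicities (s : Fin n → ℕ) : Multiset ℕ :=
  ∑ j, Multiset.replicate (s j) (j + 1)

theorem count_partsOfMultiplicities (s : Fin n → ℕ) (j : Fin n) :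
    (partsOfMultiplicities s).count ((j : ℕ) + 1) = s j := by
  rw [partsOfMultiplicities, Multiset.count_sum', sum_eq_single j] <;>
    simp +contextual [Multiset.count_replicate, Fin.val_inj]

theorem count_partsOfMultiplicities_eq_zero (s : Fin n → ℕ) {a : ℕ} (ha : a = 0 ∨ n < a) :
    (partsOfMultiplicities s).count a = 0 := by
  rw [partsOfMultiplicities, Multiset.count_sum']
  refine sum_eq_zero fun j _ => ?_
  rw [Multiset.count_replicate, if_neg]
  omega

theorem sum_partsOfMultiplicities (s : Fin n → ℕ) :
    (partsOfMultiplicities s).sum = ∑ j : Fin n, (j + 1) * s j := by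
  rw [partsOfMultiplicities, ← Multiset.coe_sumAddMonoidHom, map_sum]
  simp [mul_comm]

theorem partsOfMultiplicities_count_eq_self {P : Multiset ℕ} (hpos : ∀ a ∈ P, 0 < a)
    (hle : ∀ a ∈ P, a ≤ n) :
    partsOfMultiplicities (fun j : Fin n => P.count ((j : ℕ) + 1)) = P := by
  ext a
  by_cases ha : a = 0 ∨ n < a
  · rw [count_partsOfMultiplicities_eq_zero _ ha, eq_comm, Multiset.count_eq_zero]
    exact fun hP => by have := hpos a hP; have := hle a hP; omega
  · obtain ⟨j, rfl⟩ : ∃ j : Fin n, a = j + 1 := ⟨⟨a - 1, by omega⟩, by simp; omega⟩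
    exact count_partsOfMultiplicities _ j

theorem pos_and_le_of_mem_partsOfMultiplicities {s : Fin n → ℕ} {a : ℕ}
    (ha : a ∈ partsOfMultiplicities s) : 0 < a ∧ a ≤ n := by
  by_contra h
  exact Multiset.count_eq_zero.1 (count_partsOfMultiplicities_eq_zero s (by omega)) ha

theorem count_partsOfMultiplicities_le {s : Fin n → ℕ} {r : ℕ} (hs : ∀ j, s j ≤ r)
    (a : ℕ) :
    (partsOfMultiplicities s).count a ≤ r := by
  by_cases ha : a = 0 ∨ n < a
  · simp [count_partsOfMultiplicities_eq_zero s ha]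
  · obtain ⟨j, rfl⟩ : ∃ j : Fin n, a = j + 1 := ⟨⟨a - 1, by omega⟩, by simp; omega⟩
    exact (count_partsOfMultiplicities s j).trans_le (hs j)

end Multiplicities

def boundedPartitionEquiv (n r m : ℕ) :
    {p : Nat.Partition m // (∀ a ∈ p.parts, a ≤ n) ∧ ∀ a, p.parts.count a ≤ r} ≃
      {s : Fin n → Fin (r + 1) // ∑ j : Fin n, (j + 1) * (s j : ℕ) = m} where
  toFun p := ⟨fun j => ⟨p.1.parts.count ((j : ℕ) + 1), Nat.lt_succ_of_le (p.2.2 _)⟩,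
    (sum_partsOfMultiplicities _).symm.trans <|
      (congrArg _ <| partsOfMultiplicities_count_eq_self (fun _ ha => p.1.parts_pos ha) p.2.1).trans
        p.1.parts_sum⟩
  invFun s := ⟨⟨partsOfMultiplicities fun j => s.1 j,
      fun ha => (pos_and_le_of_mem_partsOfMultiplicities ha).1,
      (sum_partsOfMultiplicities _).trans s.2⟩,
    fun _ ha => (pos_and_le_of_mem_partsOfMultiplicities ha).2,
    count_partsOfMultiplicities_le fun j => Nat.lt_succ_iff.1 (s.1 j).2⟩
  left_inv p := Subtype.ext <| Nat.Partition.ext <|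
    partsOfMultiplicities_count_eq_self (fun _ ha => p.1.parts_pos ha) p.2.1
  right_inv _ := Subtype.ext <| funext fun j => Fin.ext <| count_partsOfMultiplicities _ j

theorem pLe_eq_card (n r m : ℕ) :
    pLe n r m = Nat.card {s : Fin n → Fin (r + 1) // ∑ j : Fin n, (j + 1) * (s j : ℕ) = m} :=
  Nat.card_congr (boundedPartitionEquiv n r m)

theorem card_subtype_add_eq_sum_range {α β : Type*} [Fintype α] [Fintype β]
    (f : α → ℕ) (g : β → ℕ) (k : ℕ) :
    Nat.card {x : α × β // f x.1 + g x.2 = k} =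
      ∑ j ∈ range (k + 1), Nat.card {a // f a = j} * Nat.card {b // g b = k - j} := by
  classical
  simp only [Nat.card_eq_fintype_card, Fintype.card_subtype]
  rw [card_eq_sum_card_fiberwise (f := fun x => f x.1) (t := range (k + 1))
    fun x hx => by
      simp only [coe_filter, Set.mem_ofPred_eq, coe_range, Set.mem_Iio] at hx ⊢
      omega]
  refine sum_congr rfl fun j hj => ?_
  rw [← card_product, filter_filter]
  congr 1
  ext ⟨a, b⟩
  simp only [mem_filter, mem_univ, true_and, mem_product]
  have := mem_range.1 hj
  omega

theorem mahonianC_eq_sum_partitions_general (c n k : ℕ) (hc : 1 ≤ c) :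
    mahonianC c n k = ∑ j ∈ Finset.range (k + 1), mahonian n j * pLe n (c - 1) (k - j) := by
  obtain ⟨r, rfl⟩ := Nat.exists_eq_add_of_le' hc
  calc mahonianC (r + 1) n k
      = Nat.card {x : (∀ j : Fin n, Fin (j + 1)) × (Fin n → Fin (r + 1)) //
          ∑ j, (x.1 j : ℕ) + ∑ j : Fin n, (j + 1) * (x.2 j : ℕ) = k} :=
        Nat.card_congr <| (coloredPermEquiv _ n).subtypeEquiv fun σ => by
          rw [invC_eq_sum_add_sum_coloredPermEquiv]
    _ = ∑ i ∈ range (k + 1),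
          Nat.card {a : ∀ j : Fin n, Fin (j + 1) // ∑ j, (a j : ℕ) = i} *
            Nat.card {s : Fin n → Fin (r + 1) // ∑ j : Fin n, (j + 1) * (s j : ℕ) = k - i} :=
        card_subtype_add_eq_sum_range (fun a : ∀ j : Fin n, Fin (j + 1) => ∑ j, (a j : ℕ))
          (fun s : Fin n → Fin (r + 1) => ∑ j : Fin n, (j + 1) * (s j : ℕ)) k
    _ = _ := by simp only [mahonian_eq_card, pLe_eq_card, Nat.add_sub_cancel]

/-- `i_c(n,k) = ∑_{j=0}^{k} i(n,j) · p_{≤n, c−1}(k−j)`. -/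
theorem mahonianC_eq_sum_partitions (c n k : ℕ) (hc : 1 ≤ c)
    (hk : k ≤ (c - 1) * n + c * n.choose 2) :
    mahonianC c n k = ∑ j ∈ Finset.range (k + 1), mahonian n j * pLe n (c - 1) (k - j) :=
  mahonianC_eq_sum_partitions_general c n k hc
end

section
/- For all integers c ≥ 1 and n ≥ 2, the total number of colored inversions satisfies the recurrence 2·I_{c,n} = c^n · n! · (cn − 1) + 2·c·n·I_{c,n−1}, with the initial value I_{c,1} = c(c−1)/2. -/
open Finset

/-- `I_{c,n}`: the total number of colored inversions over all colored
permutations of size `n`. -/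
def totalInvC (c n : ℕ) : ℕ :=
  ∑ σ : Equiv.Perm (Fin n) × (Fin n → Fin c), invC c σ

/- ### Auxiliary lemmas -/

lemma sum_fun_apply {c n : ℕ} (j : Fin n) (g : Fin c → ℕ) :
    ∑ f : Fin n → Fin c, g (f j) = c ^ (n - 1) * ∑ v : Fin c, g v := by
  have e : ∑ f : Fin n → Fin c, g (f j)
      = ∑ p : Fin c × ({ k : Fin n // k ≠ j } → Fin c), g p.1 :=
    Fintype.sum_equiv (Equiv.funSplitAt j (Fin c)) _ _ (fun f => rfl)
  have hcard : Fintype.card ({ k : Fin n // k ≠ j } → Fin c) = c ^ (n - 1) := by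
    rw [Fintype.card_fun, Fintype.card_fin]
    congr 1
    rw [Fintype.card_subtype]
    simp [Finset.filter_ne']
  rw [e, Fintype.sum_prod_type]
  simp only [Finset.sum_const, smul_eq_mul, Finset.card_univ, hcard]
  rw [← Finset.mul_sum]

lemma two_mul_card_perm_lt {n : ℕ} {i j : Fin n} (h : i ≠ j) :
    2 * (univ.filter (fun π : Equiv.Perm (Fin n) => π i < π j)).card = n.factorial := by
  have hbij : (univ.filter (fun π : Equiv.Perm (Fin n) => π i < π j)).card
      = (univ.filter (fun π : Equiv.Perm (Fin n) => π j < π i)).card := by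
    apply Finset.card_bij' (fun π _ => (Equiv.swap i j).trans π)
      (fun π _ => (Equiv.swap i j).trans π)
    · intro π hπ
      simp only [mem_filter, mem_univ, true_and] at hπ ⊢
      simpa [Equiv.swap_apply_left, Equiv.swap_apply_right] using hπ
    · intro π hπ
      simp only [mem_filter, mem_univ, true_and] at hπ ⊢
      simpa [Equiv.swap_apply_left, Equiv.swap_apply_right] using hπ
    · intro π _; ext x; simp
    · intro π _; ext x; simp
  have hsplit := Finset.card_filter_add_card_filter_not
    (s := (univ : Finset (Equiv.Perm (Fin n))))
    (p := fun π => π i < π j)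
  have hneg : (univ.filter (fun π : Equiv.Perm (Fin n) => ¬ π i < π j))
      = (univ.filter (fun π : Equiv.Perm (Fin n) => π j < π i)) := by
    apply Finset.filter_congr
    intro π _
    have hne : π i ≠ π j := fun hh => h (π.injective hh)
    constructor
    · intro hle; exact lt_of_le_of_ne (not_lt.mp hle) (Ne.symm hne)
    · intro hlt; exact not_lt.mpr hlt.le
  rw [hneg, ← hbij] at hsplit
  have hcu : (univ : Finset (Equiv.Perm (Fin n))).card = n.factorial := by
    simp [Fintype.card_perm]
  omega

/-- Number of pairs `i < j` in `Fin n × Fin n`. -/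
def pairCount (n : ℕ) : ℕ :=
  ((Finset.univ : Finset (Fin n × Fin n)).filter (fun p => p.1 < p.2)).card

lemma two_mul_pairCount (n : ℕ) : 2 * pairCount n = n * (n - 1) := by
  have h2 : pairCount n = ∑ j : Fin n, (j : ℕ) := by
    rw [pairCount, Finset.card_filter, Fintype.sum_prod_type_right]
    congr 1
    ext j
    rw [← Finset.card_filter]
    have : (univ.filter (fun i : Fin n => i < j)) = Finset.Iio j := by
      ext i; simp
    rw [this, Fin.card_Iio]
  have h3 : ∑ j : Fin n, (j : ℕ) = ∑ i ∈ Finset.range n, i :=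
    Fin.sum_univ_eq_sum_range (fun k => k) n
  rw [h2, h3, mul_comm, Finset.sum_range_id_mul_two]

lemma invNum_add_rev {n : ℕ} (π : Equiv.Perm (Fin n)) :
    invNum π + invNum (π.trans Fin.revPerm) = pairCount n := by
  have key : ∀ ρ : Equiv.Perm (Fin n),
      invNum ρ = (((univ : Finset (Fin n × Fin n)).filter (fun p => p.1 < p.2)).filter
        (fun p => ρ p.2 < ρ p.1)).card := by
    intro ρ
    rw [invNum, Finset.filter_filter]
  rw [key π, key (π.trans Fin.revPerm)]
  have hneg : (((univ : Finset (Fin n × Fin n)).filter (fun p => p.1 < p.2)).filter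
        (fun p => (π.trans Fin.revPerm) p.2 < (π.trans Fin.revPerm) p.1))
      = (((univ : Finset (Fin n × Fin n)).filter (fun p => p.1 < p.2)).filter
        (fun p => ¬ π p.2 < π p.1)) := by
    apply Finset.filter_congr
    intro p hp
    simp only [Finset.mem_filter, Finset.mem_univ, true_and] at hp
    have hne : π p.2 ≠ π p.1 := fun hh => absurd (π.injective hh) (ne_of_gt hp)
    simp only [Equiv.trans_apply, Fin.revPerm_apply, Fin.rev_lt_rev]
    constructor
    · intro hlt; exact not_lt.mpr hlt.le
    · intro hle; exact lt_of_le_of_ne (not_lt.mp hle) hne.symm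
  rw [hneg, Finset.card_filter_add_card_filter_not, pairCount]

lemma two_mul_sum_invNum (n : ℕ) :
    2 * ∑ π : Equiv.Perm (Fin n), invNum π = n.factorial * pairCount n := by
  have hb : ∑ π : Equiv.Perm (Fin n), invNum (π.trans Fin.revPerm)
      = ∑ π : Equiv.Perm (Fin n), invNum π := by
    apply Fintype.sum_equiv (Equiv.mulLeft Fin.revPerm)
    intro π
    rfl
  have hsum : ∑ π : Equiv.Perm (Fin n), (invNum π + invNum (π.trans Fin.revPerm))
      = ∑ _π : Equiv.Perm (Fin n), pairCount n :=
    Finset.sum_congr rfl (fun π _ => invNum_add_rev π)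
  rw [Finset.sum_add_distrib, hb, Finset.sum_const, smul_eq_mul] at hsum
  have hcu : (univ : Finset (Equiv.Perm (Fin n))).card = n.factorial := by
    simp [Fintype.card_perm]
  rw [hcu] at hsum
  omega

lemma count_ne_zero {d n : ℕ} (j : Fin n) :
    ∑ f : Fin n → Fin (d+1), (if ((f j : ℕ) ≠ 0) then 1 else 0)
      = (d+1) ^ (n-1) * d := by
  rw [sum_fun_apply j (fun v => if (v : ℕ) ≠ 0 then 1 else 0)]
  congr 1
  rw [Fin.sum_univ_succ]
  simp

lemma two_mul_sum_fin (c : ℕ) : 2 * ∑ v : Fin c, (v : ℕ) = c * (c - 1) := by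
  rw [Fin.sum_univ_eq_sum_range (fun k => k) c, mul_comm, Finset.sum_range_id_mul_two]

/-- Closed-form identity: `4·I_{c,n} + 2·c^n·n!·n = c^n·n!·n·(cn + c)`. -/
lemma key_formula (c n : ℕ) (hc : 1 ≤ c) (hn : 1 ≤ n) :
    4 * totalInvC c n + 2 * (c ^ n * n.factorial * n)
      = c ^ n * n.factorial * (n * (c * n + c)) := by
  obtain ⟨d, rfl⟩ : ∃ d, c = d + 1 := ⟨c - 1, by omega⟩
  obtain ⟨m, rfl⟩ : ∃ m, n = m + 1 := ⟨n - 1, by omega⟩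
  have hsplit : totalInvC (d+1) (m+1)
      = (∑ σ : Equiv.Perm (Fin (m+1)) × (Fin (m+1) → Fin (d+1)), invNum σ.1)
        + (∑ σ : Equiv.Perm (Fin (m+1)) × (Fin (m+1) → Fin (d+1)), ∑ j, (σ.2 j : ℕ))
        + (d+1) * (∑ σ : Equiv.Perm (Fin (m+1)) × (Fin (m+1) → Fin (d+1)),
            ((Finset.univ : Finset (Fin (m+1) × Fin (m+1))).filter
              (fun p => p.1 < p.2 ∧ σ.1 p.1 < σ.1 p.2 ∧ (σ.2 p.2 : ℕ) ≠ 0)).card) := by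
    rw [totalInvC]
    rw [show (fun σ : Equiv.Perm (Fin (m+1)) × (Fin (m+1) → Fin (d+1)) => invC (d+1) σ)
      = fun σ => (invNum σ.1 + ∑ j, (σ.2 j : ℕ)) +
        (d+1) * ((Finset.univ : Finset (Fin (m+1) × Fin (m+1))).filter
          (fun p => p.1 < p.2 ∧ σ.1 p.1 < σ.1 p.2 ∧ (σ.2 p.2 : ℕ) ≠ 0)).card from rfl]
    rw [Finset.sum_add_distrib, Finset.sum_add_distrib, ← Finset.mul_sum]
  set T1 := ∑ σ : Equiv.Perm (Fin (m+1)) × (Fin (m+1) → Fin (d+1)), invNum σ.1 with hT1def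
  set T2 := ∑ σ : Equiv.Perm (Fin (m+1)) × (Fin (m+1) → Fin (d+1)), ∑ j, (σ.2 j : ℕ)
    with hT2def
  set T3 := ∑ σ : Equiv.Perm (Fin (m+1)) × (Fin (m+1) → Fin (d+1)),
      ((Finset.univ : Finset (Fin (m+1) × Fin (m+1))).filter
        (fun p => p.1 < p.2 ∧ σ.1 p.1 < σ.1 p.2 ∧ (σ.2 p.2 : ℕ) ≠ 0)).card with hT3def
  set F := (m+1).factorial with hFdef
  set Q := (d+1) ^ m with hQdef
  set P := pairCount (m+1) with hPdef
  set S1 := ∑ π : Equiv.Perm (Fin (m+1)), invNum π with hS1def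
  set G := ∑ v : Fin (d+1), (v : ℕ) with hGdef
  have hm1 : (m + 1) - 1 = m := rfl
  have hcardfun : Fintype.card (Fin (m+1) → Fin (d+1)) = (d+1) ^ (m+1) := by
    rw [Fintype.card_fun, Fintype.card_fin, Fintype.card_fin]
  have hcardperm : Fintype.card (Equiv.Perm (Fin (m+1))) = F := by
    simp [Fintype.card_perm, hFdef]
  -- T1
  have hT1 : T1 = (d+1) ^ (m+1) * S1 := by
    rw [hT1def, Fintype.sum_prod_type]
    simp only [Finset.sum_const, smul_eq_mul, Finset.card_univ, hcardfun]
    rw [← Finset.mul_sum, hS1def]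
  -- T2
  have hT2 : T2 = F * ((m+1) * (Q * G)) := by
    rw [hT2def, Fintype.sum_prod_type]
    simp only [Finset.sum_const, smul_eq_mul, Finset.card_univ, hcardperm]
    congr 1
    rw [Finset.sum_comm]
    have hj : ∀ j : Fin (m+1), ∑ f : Fin (m+1) → Fin (d+1), (f j : ℕ) = Q * G := by
      intro j
      have := sum_fun_apply j (fun v : Fin (d+1) => (v : ℕ))
      rwa [hm1] at this
    rw [Finset.sum_congr rfl (fun j _ => hj j), Finset.sum_const, smul_eq_mul,
      Finset.card_univ, Fintype.card_fin]
  -- T3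
  have h2T3 : 2 * T3 = P * (F * (Q * d)) := by
    have hK : ∀ σ : Equiv.Perm (Fin (m+1)) × (Fin (m+1) → Fin (d+1)),
        ((Finset.univ : Finset (Fin (m+1) × Fin (m+1))).filter
          (fun p => p.1 < p.2 ∧ σ.1 p.1 < σ.1 p.2 ∧ (σ.2 p.2 : ℕ) ≠ 0)).card
        = ∑ p : Fin (m+1) × Fin (m+1), if p.1 < p.2 then
            (if σ.1 p.1 < σ.1 p.2 then (if (σ.2 p.2 : ℕ) ≠ 0 then 1 else 0) else 0)
          else 0 := by
      intro σ
      rw [Finset.card_filter]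
      congr 1
      ext p
      by_cases h1 : p.1 < p.2 <;> by_cases h2 : σ.1 p.1 < σ.1 p.2 <;> simp [h1, h2]
    have hswap : T3 = ∑ p : Fin (m+1) × Fin (m+1), ∑ π : Equiv.Perm (Fin (m+1)),
        ∑ f : Fin (m+1) → Fin (d+1), (if p.1 < p.2 then
            (if π p.1 < π p.2 then (if (f p.2 : ℕ) ≠ 0 then 1 else 0) else 0)
          else 0) := by
      rw [hT3def, Finset.sum_congr rfl (fun σ _ => hK σ), Fintype.sum_prod_type]
      have step : ∀ π : Equiv.Perm (Fin (m+1)),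
          (∑ f : Fin (m+1) → Fin (d+1), ∑ p : Fin (m+1) × Fin (m+1),
            (if p.1 < p.2 then
              (if π p.1 < π p.2 then (if (f p.2 : ℕ) ≠ 0 then 1 else 0) else 0) else 0))
          = ∑ p : Fin (m+1) × Fin (m+1), ∑ f : Fin (m+1) → Fin (d+1),
            (if p.1 < p.2 then
              (if π p.1 < π p.2 then (if (f p.2 : ℕ) ≠ 0 then 1 else 0) else 0) else 0) :=
        fun π => Finset.sum_comm
      rw [Finset.sum_congr rfl (fun π _ => step π), Finset.sum_comm]
    have hper : ∀ p : Fin (m+1) × Fin (m+1),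
        2 * (∑ π : Equiv.Perm (Fin (m+1)), ∑ f : Fin (m+1) → Fin (d+1), (if p.1 < p.2 then
            (if π p.1 < π p.2 then (if (f p.2 : ℕ) ≠ 0 then 1 else 0) else 0)
          else 0))
        = (if p.1 < p.2 then F * (Q * d) else 0) := by
      intro p
      by_cases hp : p.1 < p.2
      · simp only [if_pos hp]
        have hinner : ∀ π : Equiv.Perm (Fin (m+1)),
            (∑ f : Fin (m+1) → Fin (d+1), (if π p.1 < π p.2 then
              (if (f p.2 : ℕ) ≠ 0 then 1 else 0) else 0))
            = (if π p.1 < π p.2 then Q * d else 0) := by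
          intro π
          by_cases hπ : π p.1 < π p.2
          · simp only [if_pos hπ]
            have := count_ne_zero (d := d) p.2
            rwa [hm1] at this
          · simp [hπ]
        rw [Finset.sum_congr rfl (fun π _ => hinner π)]
        rw [← Finset.sum_filter, Finset.sum_const, smul_eq_mul]
        rw [← mul_assoc, two_mul_card_perm_lt (ne_of_lt hp), hFdef]
      · simp [hp]
    rw [hswap, Finset.mul_sum, Finset.sum_congr rfl (fun p _ => hper p)]
    rw [← Finset.sum_filter, Finset.sum_const, smul_eq_mul]
    rw [hPdef, pairCount]
  -- S1, P, G
  have h2S1 : 2 * S1 = F * P := two_mul_sum_invNum (m+1)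
  have h2P : 2 * P = (m+1) * m := by
    have := two_mul_pairCount (m+1)
    rwa [hm1] at this
  have h2G : 2 * G = (d+1) * d := by
    have := two_mul_sum_fin (d+1)
    rwa [show (d+1) - 1 = d from rfl] at this
  -- combine
  have e1 : 4 * T1 = (Q * (d+1)) * (F * ((m+1) * m)) := by
    have hpow : (d+1) ^ (m+1) = Q * (d+1) := by rw [hQdef, pow_succ]
    calc 4 * T1 = 2 * ((Q * (d+1)) * (2 * S1)) := by rw [hT1, hpow]; ring
    _ = 2 * ((Q * (d+1)) * (F * P)) := by rw [h2S1]
    _ = (Q * (d+1)) * (F * (2 * P)) := by ring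
    _ = (Q * (d+1)) * (F * ((m+1) * m)) := by rw [h2P]
  have e2 : 2 * T2 = F * ((m+1) * (Q * ((d+1) * d))) := by
    calc 2 * T2 = F * ((m+1) * (Q * (2 * G))) := by rw [hT2]; ring
    _ = F * ((m+1) * (Q * ((d+1) * d))) := by rw [h2G]
  have e3 : 4 * ((d+1) * T3) = (d+1) * (((m+1) * m) * (F * (Q * d))) := by
    calc 4 * ((d+1) * T3) = (d+1) * ((2 * P) * (F * (Q * d))) := by
          rw [show 4 * ((d+1) * T3) = (d+1) * (2 * (2 * T3)) from by ring, h2T3]; ring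
    _ = (d+1) * (((m+1) * m) * (F * (Q * d))) := by rw [h2P]
  have hpow : (d+1) ^ (m+1) = Q * (d+1) := by rw [hQdef, pow_succ]
  rw [hsplit]
  have expand : 4 * (T1 + T2 + (d+1) * T3)
      = 4 * T1 + 2 * (2 * T2) + 4 * ((d+1) * T3) := by ring
  rw [expand, e1, e2, e3, hpow]
  ring

/-- Recurrence `2·I_{c,n} = c^n·n!·(cn − 1) + 2·c·n·I_{c,n−1}` for `n ≥ 2`,
with the initial value `I_{c,1} = c(c−1)/2`. -/
theorem totalInvC_recurrence (c n : ℕ) (hc : 1 ≤ c) (hn : 2 ≤ n) :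
    2 * totalInvC c n = c ^ n * n.factorial * (c * n - 1) + 2 * c * n * totalInvC c (n - 1) ∧
      totalInvC c 1 = c * (c - 1) / 2 := by
  constructor
  · have h1 := key_formula c n hc (by omega)
    have h2 := key_formula c (n - 1) hc (by omega)
    have hcn : 1 ≤ c * n := by
      have : 1 * 2 ≤ c * n := Nat.mul_le_mul hc hn
      omega
    have hmain : 4 * (2 * totalInvC c n)
        = 4 * (c ^ n * n.factorial * (c * n - 1) + 2 * c * n * totalInvC c (n - 1)) := by
      obtain ⟨m, rfl⟩ : ∃ m, n = m + 2 := ⟨n - 2, by omega⟩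
      simp only [Nat.add_sub_cancel, show m + 2 - 1 = m + 1 from rfl] at h1 h2 ⊢
      zify [show (1:ℕ) ≤ c * (m + 2) from hcn] at h1 h2 ⊢
      have hfac : ((m + 2).factorial : ℤ) = (m + 2) * (m + 1).factorial := by
        push_cast [Nat.factorial_succ]
        ring
      have hpow : (c : ℤ) ^ (m + 2) = c * c ^ (m + 1) := by ring
      rw [hfac, hpow] at h1 ⊢
      linear_combination 2 * h1 - 2 * (c : ℤ) * ((m : ℤ) + 2) * h2
    exact Nat.eq_of_mul_eq_mul_left (by norm_num) hmain
  · have h1 := key_formula c 1 hc le_rfl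
    simp only [pow_one, Nat.factorial_one, mul_one, one_mul] at h1
    -- h1 : 4 * totalInvC c 1 + 2 * c = c * (c + c)  (roughly)
    have ht : c * (c - 1) + c = c * c := by
      cases c with
      | zero => rfl
      | succ k =>
        simp only [Nat.succ_sub_one]
        ring
    have hcc : c * (c + c) = 2 * (c * (c - 1)) + 2 * c := by
      have : c * (c + c) = 2 * (c * c) := by ring
      rw [this, ← ht]
      ring
    rw [hcc] at h1
    have h4 : 4 * totalInvC c 1 = 2 * (c * (c - 1)) := by
      omega
    have h5 : 2 * totalInvC c 1 = c * (c - 1) := by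
      apply Nat.eq_of_mul_eq_mul_left (show (0:ℕ) < 2 by norm_num)
      rw [show 2 * (2 * totalInvC c 1) = 4 * totalInvC c 1 from by ring, h4]
    rw [← h5]
    exact (Nat.mul_div_cancel_left _ (by norm_num)).symm
end

section
/- For all integers c ≥ 1 and n ≥ 2, the total number of colored inversions satisfies (n−1)·(cn−2)·I_{c,n} = c·n^2·(cn + c − 2)·I_{c,n−1}. -/
open Finset

/-- For `i ≠ j`, exactly half of all permutations satisfy `π j < π i`. -/
lemma perm_half {n : ℕ} (i j : Fin n) (h : i ≠ j) :
    2 * ((univ : Finset (Equiv.Perm (Fin n))).filter (fun π => π j < π i)).card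
      = Nat.factorial n := by
  have hcard : ((univ : Finset (Equiv.Perm (Fin n))).filter (fun π => π j < π i)).card
      = ((univ : Finset (Equiv.Perm (Fin n))).filter (fun π => π i < π j)).card := by
    apply Finset.card_nbij' (fun π => π * Equiv.swap i j) (fun π => π * Equiv.swap i j)
    · intro π hπ
      simp only [mem_filter, mem_univ, true_and] at *
      simpa [Equiv.Perm.mul_apply] using hπ
    · intro π hπ
      simp only [mem_filter, mem_univ, true_and] at *
      simpa [Equiv.Perm.mul_apply] using hπ
    · intro π _; simp [mul_assoc]
    · intro π _; simp [mul_assoc]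
  have hsplit := Finset.card_filter_add_card_filter_not
    (s := (univ : Finset (Equiv.Perm (Fin n)))) (fun π => π j < π i)
  have hneg : ((univ : Finset (Equiv.Perm (Fin n))).filter (fun π => ¬ π j < π i)).card
      = ((univ : Finset (Equiv.Perm (Fin n))).filter (fun π => π i < π j)).card := by
    congr 1
    apply Finset.filter_congr
    intro π _
    have : π i ≠ π j := fun hh => h (π.injective hh)
    simp only [not_lt]
    exact ⟨fun hle => lt_of_le_of_ne hle this, le_of_lt⟩
  have huniv : ((univ : Finset (Equiv.Perm (Fin n)))).card = Nat.factorial n := by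
    simp [Fintype.card_perm]
  omega

/-- Summing a function of a single coordinate over all colorings. -/
lemma sum_eval {n c : ℕ} (j : Fin n) (g : Fin c → ℕ) :
    ∑ f : Fin n → Fin c, g (f j) = c ^ (n - 1) * ∑ v, g v := by
  rw [← Equiv.sum_comp (Equiv.funSplitAt j (Fin c)).symm (fun f => g (f j)),
    Fintype.sum_prod_type]
  have hcard : (univ : Finset ({k : Fin n // k ≠ j} → Fin c)).card = c ^ (n - 1) := by
    rw [Finset.card_univ, Fintype.card_fun]
    congr 1
    · exact Fintype.card_fin c
    · rw [Fintype.card_subtype_compl, Fintype.card_subtype_eq, Fintype.card_fin]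
  simp only [Equiv.funSplitAt_symm_apply, dite_true, Finset.sum_const, smul_eq_mul, hcard,
    Finset.mul_sum]

lemma sum_val_two (c : ℕ) : (∑ v : Fin c, (v : ℕ)) * 2 = c * (c - 1) := by
  rw [Fin.sum_univ_eq_sum_range (fun k => k) c]
  exact Finset.sum_range_id_mul_two c

lemma sum_ne_zero (c : ℕ) : (∑ v : Fin c, if (v : ℕ) ≠ 0 then (1:ℕ) else 0) = c - 1 := by
  rw [Fin.sum_univ_eq_sum_range (fun k => if k ≠ 0 then (1:ℕ) else 0) c]
  induction c with
  | zero => simp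
  | succ m ih =>
    rw [Finset.sum_range_succ']
    simp

/-- Number of strictly increasing pairs, doubled. -/
lemma pairs_card (n : ℕ) :
    2 * ((univ : Finset (Fin n × Fin n)).filter (fun p => p.1 < p.2)).card = n * (n - 1) := by
  have h1 : ((univ : Finset (Fin n × Fin n)).filter (fun p => p.1 < p.2)).card
      = ∑ j : Fin n, (j : ℕ) := by
    rw [Finset.card_filter, Fintype.sum_prod_type, Finset.sum_comm]
    refine Finset.sum_congr rfl (fun j _ => ?_)
    have : (∑ i : Fin n, if i < j then (1:ℕ) else 0)
        = ((univ : Finset (Fin n)).filter (fun i => i < j)).card := by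
      rw [Finset.card_filter]
    rw [this]
    have : (univ : Finset (Fin n)).filter (fun i => i < j) = Finset.Iio j := by
      ext x; simp
    rw [this, Fin.card_Iio]
  rw [h1, mul_comm]
  exact sum_val_two n

lemma ite_split (A B : Prop) [Decidable A] [Decidable B] :
    (if A ∧ B then (1:ℕ) else 0) = (if A then (1:ℕ) else 0) * (if B then (1:ℕ) else 0) := by
  by_cases hA : A <;> by_cases hB : B <;> simp [hA, hB]

/-- Total number of ordinary inversions over all permutations, doubled. -/
lemma termA {n : ℕ} :
    2 * ∑ π : Equiv.Perm (Fin n), invNum π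
      = ((univ : Finset (Fin n × Fin n)).filter (fun p => p.1 < p.2)).card
          * Nat.factorial n := by
  have h : ∀ π : Equiv.Perm (Fin n), invNum π = ∑ p : Fin n × Fin n,
      (if p.1 < p.2 then (1:ℕ) else 0) * (if π p.2 < π p.1 then (1:ℕ) else 0) := by
    intro π
    rw [invNum, Finset.card_filter]
    exact Finset.sum_congr rfl (fun p _ => ite_split _ _)
  calc 2 * ∑ π : Equiv.Perm (Fin n), invNum π
      = ∑ p : Fin n × Fin n, 2 * ∑ π : Equiv.Perm (Fin n),
          (if p.1 < p.2 then (1:ℕ) else 0) * (if π p.2 < π p.1 then (1:ℕ) else 0) := by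
        simp only [h]
        rw [Finset.sum_comm, Finset.mul_sum]
    _ = ∑ p : Fin n × Fin n, (if p.1 < p.2 then Nat.factorial n else 0) := by
        refine Finset.sum_congr rfl (fun p _ => ?_)
        by_cases hp : p.1 < p.2
        · simp only [if_pos hp, one_mul]
          rw [Finset.sum_boole]
          push_cast
          exact perm_half p.1 p.2 (ne_of_lt hp)
        · simp [hp]
    _ = _ := by
        rw [← Finset.sum_filter, Finset.sum_const, smul_eq_mul]

/-- Total of the `π i < π j` counts over all permutations, doubled. -/
lemma termA' {n : ℕ} :
    2 * ∑ π : Equiv.Perm (Fin n), (∑ p : Fin n × Fin n,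
        (if p.1 < p.2 then (1:ℕ) else 0) * (if π p.1 < π p.2 then (1:ℕ) else 0))
      = ((univ : Finset (Fin n × Fin n)).filter (fun p => p.1 < p.2)).card
          * Nat.factorial n := by
  calc 2 * ∑ π : Equiv.Perm (Fin n), (∑ p : Fin n × Fin n,
        (if p.1 < p.2 then (1:ℕ) else 0) * (if π p.1 < π p.2 then (1:ℕ) else 0))
      = ∑ p : Fin n × Fin n, 2 * ∑ π : Equiv.Perm (Fin n),
          (if p.1 < p.2 then (1:ℕ) else 0) * (if π p.1 < π p.2 then (1:ℕ) else 0) := by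
        rw [Finset.sum_comm, Finset.mul_sum]
    _ = ∑ p : Fin n × Fin n, (if p.1 < p.2 then Nat.factorial n else 0) := by
        refine Finset.sum_congr rfl (fun p _ => ?_)
        by_cases hp : p.1 < p.2
        · simp only [if_pos hp, one_mul]
          rw [Finset.sum_boole]
          push_cast
          exact perm_half p.2 p.1 (ne_of_lt hp).symm
        · simp [hp]
    _ = _ := by
        rw [← Finset.sum_filter, Finset.sum_const, smul_eq_mul]

/-- The third statistic's total over all colored permutations, doubled. -/
lemma termC {n c : ℕ} :
    2 * ∑ π : Equiv.Perm (Fin n), ∑ f : Fin n → Fin c,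
        ((univ : Finset (Fin n × Fin n)).filter
          (fun p => p.1 < p.2 ∧ π p.1 < π p.2 ∧ (f p.2 : ℕ) ≠ 0)).card
      = ((univ : Finset (Fin n × Fin n)).filter (fun p => p.1 < p.2)).card
          * Nat.factorial n * (c ^ (n - 1) * (c - 1)) := by
  have hinner : ∀ π : Equiv.Perm (Fin n),
      ∑ f : Fin n → Fin c, ((univ : Finset (Fin n × Fin n)).filter
          (fun p => p.1 < p.2 ∧ π p.1 < π p.2 ∧ (f p.2 : ℕ) ≠ 0)).card
      = (∑ p : Fin n × Fin n,
          (if p.1 < p.2 then (1:ℕ) else 0) * (if π p.1 < π p.2 then (1:ℕ) else 0))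
        * (c ^ (n - 1) * (c - 1)) := by
    intro π
    have h1 : ∀ f : Fin n → Fin c,
        ((univ : Finset (Fin n × Fin n)).filter
          (fun p => p.1 < p.2 ∧ π p.1 < π p.2 ∧ (f p.2 : ℕ) ≠ 0)).card
        = ∑ p : Fin n × Fin n,
            ((if p.1 < p.2 then (1:ℕ) else 0) * (if π p.1 < π p.2 then (1:ℕ) else 0))
              * (if (f p.2 : ℕ) ≠ 0 then (1:ℕ) else 0) := by
      intro f
      rw [Finset.card_filter]
      refine Finset.sum_congr rfl (fun p _ => ?_)
      rw [ite_split, ite_split, mul_assoc]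
    simp only [h1]
    rw [Finset.sum_comm]
    rw [Finset.sum_mul]
    refine Finset.sum_congr rfl (fun p _ => ?_)
    rw [← Finset.mul_sum]
    congr 1
    rw [sum_eval p.2 (fun v => if (v : ℕ) ≠ 0 then (1:ℕ) else 0), sum_ne_zero]
  simp only [hinner]
  rw [← Finset.sum_mul, ← mul_assoc, termA']

/-- Closed form: `4·I_{c,n} = cⁿ·n!·(n(n−1) + 2n(c−1) + n(n−1)(c−1))`. -/
lemma closed (c n : ℕ) :
    4 * totalInvC c n
      = c ^ n * Nat.factorial n
          * (n * (n - 1) + 2 * (n * (c - 1)) + n * (n - 1) * (c - 1)) := by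
  rcases n with _ | m
  · simp [totalInvC, invC, invNum]
  set n := m + 1 with hn
  rw [totalInvC, Fintype.sum_prod_type]
  simp only [invC]
  simp only [Finset.sum_add_distrib]
  have hX : (∑ π : Equiv.Perm (Fin n), ∑ _f : Fin n → Fin c, invNum π)
      = c ^ n * ∑ π : Equiv.Perm (Fin n), invNum π := by
    simp only [Finset.sum_const, Finset.card_univ, Fintype.card_fun, Fintype.card_fin,
      smul_eq_mul, ← Finset.mul_sum]
  have hY : (∑ _π : Equiv.Perm (Fin n), ∑ f : Fin n → Fin c, ∑ j, ((f j : ℕ)))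
      = Nat.factorial n * ∑ f : Fin n → Fin c, ∑ j, ((f j : ℕ)) := by
    rw [Finset.sum_const, Finset.card_univ, Fintype.card_perm, Fintype.card_fin, smul_eq_mul]
  have hZ : (∑ π : Equiv.Perm (Fin n), ∑ f : Fin n → Fin c,
        c * ((univ : Finset (Fin n × Fin n)).filter
          (fun p => p.1 < p.2 ∧ π p.1 < π p.2 ∧ (f p.2 : ℕ) ≠ 0)).card)
      = c * ∑ π : Equiv.Perm (Fin n), ∑ f : Fin n → Fin c,
          ((univ : Finset (Fin n × Fin n)).filter
            (fun p => p.1 < p.2 ∧ π p.1 < π p.2 ∧ (f p.2 : ℕ) ≠ 0)).card := by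
    simp only [← Finset.mul_sum]
  rw [hX, hY, hZ]
  set A := ∑ π : Equiv.Perm (Fin n), invNum π with hAdef
  set W := ∑ f : Fin n → Fin c, ∑ j, ((f j : ℕ)) with hWdef
  set V := ∑ π : Equiv.Perm (Fin n), ∑ f : Fin n → Fin c,
      ((univ : Finset (Fin n × Fin n)).filter
        (fun p => p.1 < p.2 ∧ π p.1 < π p.2 ∧ (f p.2 : ℕ) ≠ 0)).card with hVdef
  set K := ((univ : Finset (Fin n × Fin n)).filter (fun p => p.1 < p.2)).card with hKdef
  have hA : 2 * A = K * Nat.factorial n := termA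
  have hK : 2 * K = n * (n - 1) := pairs_card n
  have hV : 2 * V = K * Nat.factorial n * (c ^ (n - 1) * (c - 1)) := termC
  have hW : 2 * W = n * (c ^ (n - 1) * (c * (c - 1))) := by
    rw [hWdef, Finset.sum_comm]
    have : ∀ j : Fin n, (∑ f : Fin n → Fin c, ((f j : ℕ)))
        = c ^ (n - 1) * ∑ v : Fin c, (v : ℕ) := fun j => sum_eval j _
    simp only [this, Finset.sum_const, Finset.card_univ, Fintype.card_fin, smul_eq_mul]
    rw [show (2 : ℕ) * (n * (c ^ (n-1) * ∑ v : Fin c, (v:ℕ)))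
        = n * (c ^ (n-1) * ((∑ v : Fin c, (v:ℕ)) * 2)) by ring, sum_val_two]
  have hpow : c ^ (n - 1) * c = c ^ n := by
    rw [hn]; simp [pow_succ]
  -- now pure arithmetic
  set P := c ^ (n - 1) with hPdef
  set Q := c ^ n with hQdef
  set N := Nat.factorial n with hNdef
  calc 4 * (Q * A + N * W + c * V)
      = Q * ((2 * A) * 2) + N * ((2 * W) * 2) + c * ((2 * V) * 2) := by ring
    _ = (2 * K) * (Q * N) + 2 * (N * (n * (P * (c * (c - 1)))))
          + (2 * K) * (c * N * (P * (c - 1))) := by rw [hA, hW, hV]; ring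
    _ = (n * (n - 1)) * (Q * N) + 2 * (N * (n * (P * (c * (c - 1)))))
          + (n * (n - 1)) * (c * N * (P * (c - 1))) := by rw [hK]
    _ = Q * N * (n * (n - 1) + 2 * (n * (c - 1)) + n * (n - 1) * (c - 1)) := by
        rw [← hpow]; ring

/-- `(n−1)·(cn−2)·I_{c,n} = c·n²·(cn + c − 2)·I_{c,n−1}` for `n ≥ 2`. -/
theorem totalInvC_ratio (c n : ℕ) (hc : 1 ≤ c) (hn : 2 ≤ n) :
    (n - 1) * (c * n - 2) * totalInvC c n =
      c * n ^ 2 * (c * n + c - 2) * totalInvC c (n - 1) := by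
  obtain ⟨d, rfl⟩ : ∃ d, c = d + 1 := ⟨c - 1, by omega⟩
  obtain ⟨m, rfl⟩ : ∃ m, n = m + 2 := ⟨n - 2, by omega⟩
  have r1 : m + 2 - 1 = m + 1 := by omega
  have r2 : d + 1 - 1 = d := by omega
  have r3 : m + 1 - 1 = m := by omega
  have hle : 2 ≤ (d + 1) * (m + 2) := by
    calc 2 = 1 * 2 := by norm_num
    _ ≤ (d + 1) * (m + 2) := Nat.mul_le_mul (by omega) (by omega)
  have e1 : (d + 1) * (m + 2) - 2 = d * m + 2 * d + m := by
    rw [Nat.sub_eq_iff_eq_add hle]; ring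
  have e2 : (d + 1) * (m + 2) + (d + 1) - 2 = d * m + 3 * d + m + 1 := by
    rw [Nat.sub_eq_iff_eq_add (le_trans hle (Nat.le_add_right _ _))]; ring
  have h1 := closed (d + 1) (m + 2)
  have h2 := closed (d + 1) (m + 1)
  rw [r1, r2] at h1
  rw [r3, r2] at h2
  rw [r1, e1, e2]
  apply Nat.eq_of_mul_eq_mul_left (show 0 < 4 by norm_num)
  calc 4 * ((m + 1) * (d * m + 2 * d + m) * totalInvC (d + 1) (m + 2))
      = (m + 1) * (d * m + 2 * d + m) * (4 * totalInvC (d + 1) (m + 2)) := by ring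
    _ = (m + 1) * (d * m + 2 * d + m) * ((d + 1) ^ (m + 2) * Nat.factorial (m + 2)
          * ((m + 2) * (m + 1) + 2 * ((m + 2) * d) + (m + 2) * (m + 1) * d)) := by rw [h1]
    _ = (d + 1) * (m + 2) ^ 2 * (d * m + 3 * d + m + 1) * ((d + 1) ^ (m + 1)
          * Nat.factorial (m + 1) * ((m + 1) * m + 2 * ((m + 1) * d) + (m + 1) * m * d)) := by
        rw [show (d + 1) ^ (m + 2) = (d + 1) ^ (m + 1) * (d + 1) from pow_succ _ _,
          show Nat.factorial (m + 2) = (m + 2) * Nat.factorial (m + 1) from rfl]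
        ring
    _ = (d + 1) * (m + 2) ^ 2 * (d * m + 3 * d + m + 1)
          * (4 * totalInvC (d + 1) (m + 1)) := by rw [h2]
    _ = 4 * ((d + 1) * (m + 2) ^ 2 * (d * m + 3 * d + m + 1)
          * totalInvC (d + 1) (m + 1)) := by ring
end

section
/- For all integers c ≥ 1 and n ≥ 0, the number of colored involutions of size n is given, as an equality of rational numbers, by r_n^{(c)} = ∑_{0 ≤ k ≤ n, k ≡ n (mod 2)} C(n,k) · (3 + (−1)^c)^k · c^{(n−k)/2} · (n−k)! / ( 2^{(n+k)/2} · ((n−k)/2)! ). -/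
open Finset

/-- A colored involution: a colored permutation `σ = (π, f)` with `π ∘ π = id`
and `f(i) + f(π(i)) ≡ 0 (mod c)` for every `i`. -/
def IsColoredInvolution {c n : ℕ} (σ : Equiv.Perm (Fin n) × (Fin n → Fin c)) : Prop :=
  σ.1 * σ.1 = 1 ∧ ∀ i, ((σ.2 i : ℕ) + (σ.2 (σ.1 i) : ℕ)) % c = 0

/-- `r_n^{(c)}`: the number of colored involutions of size `n`. -/
noncomputable def involutionCountC (c n : ℕ) : ℕ :=
  Nat.card {σ : Equiv.Perm (Fin n) × (Fin n → Fin c) // IsColoredInvolution σ}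

/-! A colored involution of `Fin (n + 1)` either fixes `0`, whose color `x` must satisfy `-x = x`
(`a` choices: `2` if `c` is even, `1` if `c` is odd), or swaps `0` with one of the `n` other
points, whose colors are then `x` and `-x` (`c` choices); deleting the orbit of `0` leaves a
colored involution of the remaining points. Hence `r (n + 1) = a r n + n c r (n - 1)`, which is
the recurrence of `∑ₘ C(n, 2m) (2m - 1)‼ cᵐ aⁿ⁻²ᵐ`, the sum over all involutions of
`a ^ (fixed points) * c ^ (two-cycles)`. Reindexing by the number `k = n - 2m` of fixed points
and using `3 + (-1)ᶜ = 2a` gives the stated sum. -/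

open Equiv Finset
open scoped Nat

/-- The number of ways to choose `m` disjoint pairs among `n` points. -/
def pairingCount (n m : ℕ) : ℕ := n.choose (2 * m) * (2 * m - 1)‼

lemma pairingCount_eq_zero {n m : ℕ} (h : n < 2 * m) : pairingCount n m = 0 := by
  rw [pairingCount, Nat.choose_eq_zero_of_lt h, zero_mul]

lemma pairingCount_zero_right (n : ℕ) : pairingCount n 0 = 1 := by
  simp [pairingCount]

lemma pairingCount_succ_succ (n m : ℕ) :
    pairingCount (n + 2) (m + 1) = pairingCount (n + 1) (m + 1) + (n + 1) * pairingCount n m := by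
  have hodd : (2 * (m + 1) - 1)‼ = (2 * m + 1) * (2 * m - 1)‼ := by
    rw [show 2 * (m + 1) - 1 = 2 * m + 1 by omega, Nat.doubleFactorial_add_one]
  have hpascal := Nat.choose_succ_succ' (n + 1) (2 * m + 1)
  have habsorb := Nat.add_one_mul_choose_eq n (2 * m)
  rw [pairingCount, pairingCount, pairingCount, hodd, show 2 * (m + 1) = 2 * m + 1 + 1 by ring,
    hpascal]
  calc ((n + 1).choose (2 * m + 1) + (n + 1).choose (2 * m + 1 + 1)) *
        ((2 * m + 1) * (2 * m - 1)‼)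
      = (n + 1).choose (2 * m + 1) * (2 * m + 1) * (2 * m - 1)‼ +
          (n + 1).choose (2 * m + 1 + 1) * ((2 * m + 1) * (2 * m - 1)‼) := by ring
    _ = _ := by rw [← habsorb]; ring

section PairingSum

variable {R : Type*} [CommSemiring R] (a q : R)

def pairingTerm (n m : ℕ) : R := pairingCount n m * q ^ m * a ^ (n - 2 * m)

/-- Pairings of `n` points weighted by `q` per pair and `a` per unpaired point. -/
def pairingSum (n : ℕ) : R := ∑ m ∈ range (n + 1), pairingTerm a q n m

lemma mul_pairingTerm (n m : ℕ) :
    a * pairingTerm a q n m = pairingCount n m * q ^ m * a ^ (n + 1 - 2 * m) := by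
  rcases lt_or_ge n (2 * m) with h | h
  · simp [pairingTerm, pairingCount_eq_zero h]
  · rw [pairingTerm, Nat.sub_add_comm h, pow_succ]
    ring

lemma pairingTerm_succ_zero (n : ℕ) : pairingTerm a q (n + 1) 0 = a * pairingTerm a q n 0 := by
  simp [pairingTerm, pairingCount_zero_right, pow_succ, mul_comm]

lemma pairingTerm_succ_succ (n m : ℕ) :
    pairingTerm a q (n + 2) (m + 1) =
      a * pairingTerm a q (n + 1) (m + 1) + (n + 1) * q * pairingTerm a q n m := by
  rw [mul_pairingTerm, pairingTerm, pairingTerm, pairingCount_succ_succ,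
    show n + 2 - 2 * (m + 1) = n - 2 * m by omega]
  push_cast
  ring

lemma pairingSum_eq_sum_range {n N : ℕ} (h : n / 2 < N) :
    pairingSum a q n = ∑ m ∈ range N, pairingTerm a q n m := by
  have hzero (N' : ℕ) (m : ℕ) (hm : m ∈ range N') (hm' : m ∉ range (n / 2 + 1)) :
      pairingTerm a q n m = 0 := by
    simp only [mem_range] at hm'
    simp [pairingTerm, pairingCount_eq_zero (show n < 2 * m by omega)]
  rw [pairingSum, ← sum_subset (range_mono (show n / 2 + 1 ≤ n + 1 by omega)) (hzero (n + 1)),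
    ← sum_subset (range_mono (show n / 2 + 1 ≤ N by omega)) (hzero N)]

lemma pairingSum_zero : pairingSum a q 0 = 1 := by
  simp [pairingSum, pairingTerm, pairingCount_zero_right]

lemma pairingSum_succ (n : ℕ) :
    pairingSum a q (n + 1) = a * pairingSum a q n + n * q * pairingSum a q (n - 1) := by
  cases n with
  | zero =>
    simp [pairingSum, pairingTerm, sum_range_succ, pairingCount_zero_right,
      pairingCount_eq_zero (show 1 < 2 * 1 by norm_num)]
  | succ n =>
    rw [pairingSum_eq_sum_range a q (show (n + 2) / 2 < n + 3 by omega),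
      sum_range_succ' (pairingTerm a q (n + 2)),
      pairingSum_eq_sum_range a q (show (n + 1) / 2 < n + 3 by omega),
      sum_range_succ' (pairingTerm a q (n + 1)),
      Nat.add_sub_cancel, pairingSum_eq_sum_range a q (show n / 2 < n + 2 by omega)]
    simp only [pairingTerm_succ_succ, pairingTerm_succ_zero, sum_add_distrib, mul_add, mul_sum]
    push_cast
    ring

theorem eq_pairingSum {u : ℕ → R} (h0 : u 0 = 1)
    (h : ∀ n, u (n + 1) = a * u n + n * q * u (n - 1)) (n : ℕ) : u n = pairingSum a q n := by
  induction n using Nat.strong_induction_on with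
  | _ n ih =>
    cases n with
    | zero => rw [h0, pairingSum_zero]
    | succ n => rw [h, pairingSum_succ, ih n (by omega), ih (n - 1) (by omega)]

end PairingSum

lemma factorial_two_mul_eq (m : ℕ) : (2 * m)! = 2 ^ m * m ! * (2 * m - 1)‼ := by
  cases m with
  | zero => rfl
  | succ m =>
    rw [show 2 * (m + 1) = 2 * m + 1 + 1 by ring, Nat.factorial_eq_mul_doubleFactorial,
      show 2 * m + 1 + 1 = 2 * (m + 1) by ring, Nat.doubleFactorial_two_mul,
      show 2 * (m + 1) - 1 = 2 * m + 1 by omega]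

theorem pairingSum_eq_sum_choose {K : Type*} [Field K] [CharZero K] (a q : K) (n : ℕ) :
    pairingSum a q n = ∑ k ∈ range (n + 1), if k % 2 = n % 2 then
      (n.choose k : K) * (2 * a) ^ k * q ^ ((n - k) / 2) * ((n - k)! : K) /
        (2 ^ ((n + k) / 2) * (((n - k) / 2)! : K)) else 0 := by
  rw [← sum_filter, pairingSum_eq_sum_range a q (Nat.lt_succ_self (n / 2))]
  refine sum_nbij' (fun m => n - 2 * m) (fun k => (n - k) / 2) ?_ ?_ ?_ ?_ ?_
  iterate 4 (intro i hi; simp only [mem_range, mem_filter] at hi ⊢; omega)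
  · intro m hm
    simp only [mem_range] at hm
    have hle : 2 * m ≤ n := by omega
    rw [show n - (n - 2 * m) = 2 * m by omega,
      show (n + (n - 2 * m)) / 2 = (n - 2 * m) + m by omega, show 2 * m / 2 = m by omega,
      Nat.choose_symm hle, pairingTerm, pairingCount,
      factorial_two_mul_eq]
    have hfac : (m ! : K) ≠ 0 := Nat.cast_ne_zero.2 m.factorial_ne_zero
    push_cast
    field_simp
    ring

lemma eq_or_eq_of_not_ne_and_ne {α : Type*} {b b' y : α} (hy : ¬(y ≠ b ∧ y ≠ b')) :
    y = b ∨ y = b' := by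
  tauto

lemma card_subtype_ne_and_ne {α : Type*} [Fintype α] [DecidableEq α] (b b' : α) :
    Fintype.card {y // y ≠ b ∧ y ≠ b'} = Fintype.card α - ({b, b'} : Finset α).card := by
  rw [Fintype.card_subtype, ← card_univ, ← card_sdiff_of_subset (subset_univ _)]
  congr 1
  ext y
  simp

/-- A colored involution with colors in `G`; `IsColoredInvolution` is the case `G = Fin c`. -/
@[ext]
structure ColoredInvolution (α G : Type*) [Neg G] where
  perm : Perm α
  color : α → G
  involutive : Function.Involutive perm
  color_perm (i : α) : color (perm i) = -color i

namespace ColoredInvolution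

variable {α β G : Type*}

section Neg

variable [Neg G]

instance [Finite α] [Finite G] : Finite (ColoredInvolution α G) :=
  Finite.of_injective (fun σ => (σ.perm, σ.color)) fun _ _ h =>
    ColoredInvolution.ext (congrArg Prod.fst h) (congrArg Prod.snd h)

def map (e : α ≃ β) (σ : ColoredInvolution α G) : ColoredInvolution β G where
  perm := e.permCongr σ.perm
  color := σ.color ∘ e.symm
  involutive x := by simp [σ.involutive _]
  color_perm x := by simp [σ.color_perm]

def congr (e : α ≃ β) : ColoredInvolution α G ≃ ColoredInvolution β G where
  toFun := map e
  invFun := map e.symm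
  left_inv σ := by ext <;> simp [map]
  right_inv τ := by ext <;> simp [map]

theorem card_congr (e : α ≃ β) :
    Nat.card (ColoredInvolution α G) = Nat.card (ColoredInvolution β G) :=
  Nat.card_congr (congr e)

instance [IsEmpty α] : Subsingleton (ColoredInvolution α G) :=
  ⟨fun _ _ => ColoredInvolution.ext (Subsingleton.elim _ _) (Subsingleton.elim _ _)⟩

end Neg

section Fiber

variable [DecidableEq α] [InvolutiveNeg G] {b b' : α}

def extendPerm (b b' : α) (ρ : Perm {y // y ≠ b ∧ y ≠ b'}) : Perm α :=
  swap b b' * Perm.ofSubtype ρ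

section extendPerm

variable (ρ : Perm {y // y ≠ b ∧ y ≠ b'})

lemma extendPerm_apply_coe (y : {y // y ≠ b ∧ y ≠ b'}) : extendPerm b b' ρ y = ρ y := by
  rw [extendPerm, Perm.mul_apply, Perm.ofSubtype_apply_coe]
  exact swap_apply_of_ne_of_ne (ρ y).2.1 (ρ y).2.2

lemma extendPerm_apply_left : extendPerm b b' ρ b = b' := by
  rw [extendPerm, Perm.mul_apply, Perm.ofSubtype_apply_of_not_mem ρ (by simp), swap_apply_left]

lemma extendPerm_apply_right : extendPerm b b' ρ b' = b := by
  rw [extendPerm, Perm.mul_apply, Perm.ofSubtype_apply_of_not_mem ρ (by simp), swap_apply_right]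

end extendPerm

def extendColor (b b' : α) (x : G) (g : {y // y ≠ b ∧ y ≠ b'} → G) (y : α) : G :=
  if h : y ≠ b ∧ y ≠ b' then g ⟨y, h⟩ else if y = b then x else -x

section extendColor

variable (x : G) (g : {y // y ≠ b ∧ y ≠ b'} → G)

lemma extendColor_coe (y : {y // y ≠ b ∧ y ≠ b'}) : extendColor b b' x g y = g y :=
  dif_pos y.2

lemma extendColor_left : extendColor b b' x g b = x := by
  simp [extendColor]

lemma extendColor_right (h : b' ≠ b) : extendColor b b' x g b' = -x := by
  simp [extendColor, h]

end extendColor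

/-- The colored involution of `α` that pairs `b` with `b'` (fixes `b` if `b' = b`), colors
`b` by `x`, and agrees with `τ` off `{b, b'}`. -/
def extend (x : {x : G // b' = b → -x = x})
    (τ : ColoredInvolution {y // y ≠ b ∧ y ≠ b'} G) : ColoredInvolution α G where
  perm := extendPerm b b' τ.perm
  color := extendColor b b' x τ.color
  involutive y := by
    by_cases hy : y ≠ b ∧ y ≠ b'
    · lift y to {y // y ≠ b ∧ y ≠ b'} using hy
      rw [extendPerm_apply_coe, extendPerm_apply_coe, τ.involutive]
    · rcases eq_or_eq_of_not_ne_and_ne hy with h | h <;> subst y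
      · rw [extendPerm_apply_left, extendPerm_apply_right]
      · rw [extendPerm_apply_right, extendPerm_apply_left]
  color_perm y := by
    by_cases hy : y ≠ b ∧ y ≠ b'
    · lift y to {y // y ≠ b ∧ y ≠ b'} using hy
      rw [extendPerm_apply_coe, extendColor_coe, extendColor_coe, τ.color_perm]
    · by_cases hbb : b' = b
      · subst hbb
        have hy : y = b' := by tauto
        subst hy
        rw [extendPerm_apply_left, extendColor_left, x.2 rfl]
      · rcases eq_or_eq_of_not_ne_and_ne hy with h | h <;> subst y
        · rw [extendPerm_apply_left, extendColor_left, extendColor_right _ _ hbb]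
        · rw [extendPerm_apply_right, extendColor_left, extendColor_right _ _ hbb, neg_neg]

def restrict (σ : ColoredInvolution α G) (hb : σ.perm b = b') :
    ColoredInvolution {y // y ≠ b ∧ y ≠ b'} G where
  perm := σ.perm.subtypePerm fun y => by
    rw [Ne, Ne, σ.involutive.eq_iff, σ.involutive.eq_iff, hb, ← hb, σ.involutive]
    tauto
  color y := σ.color y
  involutive y := Subtype.ext (σ.involutive y)
  color_perm y := σ.color_perm y

def fiberEquiv (b b' : α) :
    {σ : ColoredInvolution α G // σ.perm b = b'} ≃
      {x : G // b' = b → -x = x} × ColoredInvolution {y // y ≠ b ∧ y ≠ b'} G where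
  toFun σ := (⟨σ.1.color b, fun h => by
      have := σ.1.color_perm b
      rwa [σ.2.trans h, eq_comm] at this⟩, σ.1.restrict σ.2)
  invFun p := ⟨extend p.1 p.2, extendPerm_apply_left _⟩
  left_inv := by
    rintro ⟨σ, hb⟩
    have hb' : σ.perm b' = b := by rw [← hb, σ.involutive]
    refine Subtype.ext (ColoredInvolution.ext (Equiv.ext fun y => ?_) (funext fun y => ?_))
    · by_cases hy : y ≠ b ∧ y ≠ b'
      · lift y to {y // y ≠ b ∧ y ≠ b'} using hy
        exact extendPerm_apply_coe _ _
      · rcases eq_or_eq_of_not_ne_and_ne hy with h | h <;> subst y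
        · exact (extendPerm_apply_left _).trans hb.symm
        · exact (extendPerm_apply_right _).trans hb'.symm
    · by_cases hy : y ≠ b ∧ y ≠ b'
      · lift y to {y // y ≠ b ∧ y ≠ b'} using hy
        exact extendColor_coe _ _ _
      · rcases eq_or_eq_of_not_ne_and_ne hy with h | h <;> subst y
        · exact extendColor_left _ _
        · by_cases hbb : b' = b
          · subst hbb
            exact extendColor_left _ _
          · dsimp only [extend]
            rw [extendColor_right _ _ hbb, ← σ.color_perm, hb]
  right_inv := by
    rintro ⟨x, τ⟩
    refine Prod.ext (Subtype.ext (extendColor_left _ _)) ?_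
    refine ColoredInvolution.ext (Equiv.ext fun y => Subtype.ext ?_) (funext fun y => ?_)
    · exact extendPerm_apply_coe _ _
    · exact extendColor_coe _ _ _

end Fiber

section Count

variable [Finite G] [InvolutiveNeg G] [Fintype α] [DecidableEq α]

theorem card_eq_sum (b : α) :
    Nat.card (ColoredInvolution α G) = ∑ b', Nat.card {x : G // b' = b → -x = x} *
      Nat.card (ColoredInvolution {y // y ≠ b ∧ y ≠ b'} G) := by
  rw [← Nat.card_congr (Equiv.sigmaFiberEquiv fun σ : ColoredInvolution α G => σ.perm b),
    Nat.card_sigma]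
  exact Fintype.sum_congr _ _ fun b' => by rw [Nat.card_congr (fiberEquiv b b'), Nat.card_prod]

-- At `n = 0` the truncated `n - 1` is harmless: its term carries the factor `n`.
theorem card_fin_succ (n : ℕ) :
    Nat.card (ColoredInvolution (Fin (n + 1)) G) =
      Nat.card {x : G // -x = x} * Nat.card (ColoredInvolution (Fin n) G) +
        n * Nat.card G * Nat.card (ColoredInvolution (Fin (n - 1)) G) := by
  rw [card_eq_sum 0, Fintype.sum_eq_add_sum_compl 0]
  congr 1
  · rw [card_congr (Fintype.equivFinOfCardEq (card_subtype_ne_and_ne 0 0))]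
    simp
  · have hterm (b' : Fin (n + 1)) (hb' : b' ∈ ({0}ᶜ : Finset _)) :
        Nat.card {x : G // b' = 0 → -x = x} *
          Nat.card (ColoredInvolution {y // y ≠ 0 ∧ y ≠ b'} G) =
        Nat.card G * Nat.card (ColoredInvolution (Fin (n - 1)) G) := by
      have hb' : b' ≠ 0 := by simpa using hb'
      rw [Nat.card_congr (Equiv.subtypeUnivEquiv fun x h => absurd h hb'),
        card_congr (Fintype.equivFinOfCardEq (card_subtype_ne_and_ne 0 b'))]
      simp [Finset.card_pair hb'.symm]
    rw [Finset.sum_congr rfl hterm, Finset.sum_const, Finset.card_compl]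
    simp [mul_assoc]

omit [Fintype α] [DecidableEq α] in
theorem card_fin_eq_pairingSum {R : Type*} [CommSemiring R] (n : ℕ) :
    (Nat.card (ColoredInvolution (Fin n) G) : R) =
      pairingSum (Nat.card {x : G // -x = x} : R) (Nat.card G : R) n := by
  refine eq_pairingSum (u := fun n => (Nat.card (ColoredInvolution (Fin n) G) : R)) _ _ ?_
    (fun n => ?_) n
  · rw [Nat.card_eq_one_iff_unique.2
      ⟨inferInstance, ⟨⟨1, finZeroElim, finZeroElim, finZeroElim⟩⟩⟩, Nat.cast_one]
  · rw [card_fin_succ (G := G) n]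
    push_cast
    ring

end Count

end ColoredInvolution

theorem Fin.neg_eq_self_iff {c : ℕ} [NeZero c] (x : Fin c) :
    -x = x ↔ x = 0 ∨ 2 * x.val = c := by
  rw [neg_eq_iff_add_eq_zero, Fin.ext_iff, Fin.ext_iff, Fin.val_add, Fin.val_zero]
  have := x.isLt
  rcases lt_or_ge (x.val + x.val) c with h | h
  · rw [Nat.mod_eq_of_lt h]; omega
  · rw [Nat.mod_eq_sub_mod h, Nat.mod_eq_of_lt (by omega)]; omega

theorem card_neg_eq_self_fin (c : ℕ) [NeZero c] :
    Nat.card {x : Fin c // -x = x} = if Even c then 2 else 1 := by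
  have hc := NeZero.pos c
  rw [Nat.card_eq_fintype_card, Fintype.card_subtype]
  split_ifs with h
  · obtain ⟨j, rfl⟩ := h
    rw [← card_pair (a := (0 : Fin (j + j))) (b := ⟨j, by omega⟩)
      (by simp [Fin.ext_iff]; omega)]
    congr 1
    ext x
    simp only [mem_filter, mem_univ, true_and, Fin.neg_eq_self_iff]
    simp only [mem_insert, mem_singleton, Fin.ext_iff, Fin.val_zero]
    omega
  · rw [← card_singleton (0 : Fin c)]
    congr 1
    ext x
    simp only [mem_filter, mem_univ, true_and, mem_singleton, Fin.neg_eq_self_iff]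
    have : ¬ 2 * x.val = c := fun h' => h ⟨x.val, by omega⟩
    tauto

theorem three_add_neg_one_pow_eq (R : Type*) [Ring R] (c : ℕ) [NeZero c] :
    3 + (-1 : R) ^ c = 2 * Nat.card {x : Fin c // -x = x} := by
  rw [card_neg_eq_self_fin]
  rcases Nat.even_or_odd c with h | h
  · rw [h.neg_one_pow, if_pos h]; norm_num
  · rw [h.neg_one_pow, if_neg (Nat.not_even_iff_odd.2 h)]; norm_num

theorem involutionCountC_eq_card (c n : ℕ) [NeZero c] :
    involutionCountC c n = Nat.card (ColoredInvolution (Fin n) (Fin c)) := by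
  have hiff (σ : Perm (Fin n) × (Fin n → Fin c)) :
      IsColoredInvolution σ ↔ Function.Involutive σ.1 ∧ ∀ i, σ.2 (σ.1 i) = -σ.2 i := by
    refine and_congr Equiv.ext_iff (forall_congr' fun i => ?_)
    rw [eq_neg_iff_add_eq_zero, add_comm, Fin.ext_iff, Fin.val_add, Fin.val_zero]
  exact Nat.card_congr
    { toFun σ := ⟨σ.1.1, σ.1.2, ((hiff _).1 σ.2).1, ((hiff _).1 σ.2).2⟩
      invFun τ := ⟨(τ.perm, τ.color), (hiff _).2 ⟨τ.involutive, τ.color_perm⟩⟩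
      left_inv _ := rfl
      right_inv _ := rfl }

/-- Closed formula for the number of colored involutions, as an equality of
rational numbers:
`r_n^{(c)} = ∑_{0 ≤ k ≤ n, k ≡ n (mod 2)} C(n,k)·(3+(−1)^c)^k·c^{(n−k)/2}·(n−k)! / (2^{(n+k)/2}·((n−k)/2)!)`. -/
theorem involutionCountC_formula (c n : ℕ) (hc : 1 ≤ c) :
    (involutionCountC c n : ℚ) =
      ∑ k ∈ Finset.range (n + 1),
        if k % 2 = n % 2 then
          (n.choose k : ℚ) * (3 + (-1 : ℚ) ^ c) ^ k * (c : ℚ) ^ ((n - k) / 2) *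
            ((n - k).factorial : ℚ) /
            ((2 : ℚ) ^ ((n + k) / 2) * (((n - k) / 2).factorial : ℚ))
        else 0 := by
  have : NeZero c := ⟨by omega⟩
  rw [three_add_neg_one_pow_eq, ← pairingSum_eq_sum_choose, involutionCountC_eq_card,
    ColoredInvolution.card_fin_eq_pairingSum, Nat.card_fin]
end

section
/- For every integer n ≥ 4, the total number of inversions over all involutions of {1,…,n} satisfies i_n = C(n,2)·r_{n−2} + 2·C(n,3)·r_{n−3} + 6·C(n,4)·r_{n−4}, where r_m denotes the number of involutions of {1,…,m}. -/
open Finset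

/-- `i_n`: the total number of inversions over all involutions of `{1,…,n}`. -/
def totalInvInvolution (n : ℕ) : ℕ :=
  ∑ π ∈ Finset.univ.filter (fun π : Equiv.Perm (Fin n) => π * π = 1), invNum π

/-- `r_m`: the number of involutions of `{1,…,m}`. -/
def involutionCount (m : ℕ) : ℕ :=
  (Finset.univ.filter (fun π : Equiv.Perm (Fin m) => π * π = 1)).card

/-!
Double counting: `i_n` is the number of pairs `(π, (i, j))` with `π` an involution and `(i, j)`
an inversion of `π`. Sort them by how `π` acts on `i < j`: either `π` swaps `i` and `j`; or it
fixes `i` and swaps `j` with some `k < i`; or it fixes `j` and swaps `i` with some `k > j`; or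
`i, j, π i, π j` are four distinct points. In each case `(i, j)` together with `π i, π j` is a
sorted pattern on a set `s` of `2`, `3`, `3` or `4` points, and there are `C(n,2)`, `C(n,3)`,
`C(n,3)` and `C(n,2)·C(n-2,2) = 6·C(n,4)` patterns. The involutions realising a given pattern
are exactly the involutions of the complement of `s`, so each is counted by `r_{n-|s|}`.
-/

open Equiv

theorem Equiv.Perm.mul_self_eq_one_iff {α : Type*} {π : Perm α} :
    π * π = 1 ↔ ∀ x, π (π x) = x := by
  simp [Perm.ext_iff]

theorem Equiv.Perm.apply_iff_of_forall_apply_eq {α : Type*} {p : α → Prop} {ρ : Perm α}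
    (h : ∀ x, p x → ρ x = x) (x : α) : p (ρ x) ↔ p x :=
  ⟨fun hx => ρ.injective (h _ hx) ▸ hx, fun hx => (h x hx).symm ▸ hx⟩

theorem card_involutions_congr {α β : Type*} [Fintype α] [DecidableEq α] [Fintype β]
    [DecidableEq β] (e : α ≃ β) :
    #{π : Perm α | π * π = 1} = #{π : Perm β | π * π = 1} :=
  card_equiv e.permCongr fun π => by
    simp [Perm.mul_self_eq_one_iff, ← e.forall_congr_right]

theorem card_involutions_agreeing_on {α : Type*} [Fintype α] [DecidableEq α] (s : Finset α)
    {σ : Perm α} (hσ : σ * σ = 1) (hσs : ∀ x ∉ s, σ x = x) :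
    #{π : Perm α | π * π = 1 ∧ ∀ x ∈ s, π x = σ x} =
      #{τ : Perm {x // x ∉ s} | τ * τ = 1} := by
  have hσ_mem (x : α) : σ x ∈ s ↔ x ∈ s :=
    not_iff_not.1 (Perm.apply_iff_of_forall_apply_eq hσs x)
  symm
  refine card_bij (fun τ _ => Perm.ofSubtype τ * σ) ?_ ?_ ?_
  · intro τ hτ
    rw [mem_filter] at hτ ⊢
    have fix {x} (hx : x ∈ s) : Perm.ofSubtype τ x = x :=
      Perm.ofSubtype_apply_of_not_mem τ (not_not.2 hx)
    have comm : Commute σ (Perm.ofSubtype τ) := Perm.Disjoint.commute fun x => by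
      by_cases hx : x ∈ s
      exacts [.inr (fix hx), .inl (hσs x hx)]
    refine ⟨mem_univ _, ?_, fun x hx => by rw [Perm.mul_apply, fix ((hσ_mem x).2 hx)]⟩
    rw [comm.mul_mul_mul_comm, ← map_mul, hτ.2, hσ, map_one, one_mul]
  · intro τ₁ _ τ₂ _ h
    exact Perm.ofSubtype_injective (mul_right_cancel h)
  · intro π hπ
    simp only [mem_filter, mem_univ, true_and] at hπ
    obtain ⟨hππ, hagree⟩ := hπ
    set ρ := π * σ
    have fix {x} (hx : x ∈ s) : ρ x = x := by
      rw [Perm.mul_apply, hagree _ ((hσ_mem x).2 hx), ← Perm.mul_apply, hσ, Perm.one_apply]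
    have hρ (x : α) : ρ x ∉ s ↔ x ∉ s :=
      not_congr (Perm.apply_iff_of_forall_apply_eq (fun _ => fix) x)
    have comm : Commute ρ σ := Perm.Disjoint.commute fun x => by
      by_cases hx : x ∈ s
      exacts [.inl (fix hx), .inr (hσs x hx)]
    have hlift : Perm.ofSubtype (ρ.subtypePerm hρ) = ρ :=
      Perm.ofSubtype_subtypePerm (p := (· ∉ s)) hρ fun x hx h => hx (fix h)
    refine ⟨ρ.subtypePerm hρ, mem_filter.2 ⟨mem_univ _, Perm.ofSubtype_injective ?_⟩, ?_⟩
    · have hπ : π = σ * (π * σ) := by simpa only [ρ, mul_assoc, hσ, mul_one] using comm.eq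
      calc Perm.ofSubtype (ρ.subtypePerm hρ * ρ.subtypePerm hρ)
          = π * (σ * (π * σ)) := by rw [map_mul, hlift, mul_assoc]
        _ = Perm.ofSubtype 1 := by rw [← hπ, hππ, map_one]
    · rw [hlift, mul_assoc, hσ, mul_one]

theorem card_involutions_agreeing_eq_involutionCount {α : Type*} [Fintype α] [DecidableEq α]
    (s : Finset α) {σ : Perm α} (hσ : σ * σ = 1) (hσs : ∀ x ∉ s, σ x = x) :
    #{π : Perm α | π * π = 1 ∧ ∀ x ∈ s, π x = σ x} =
      involutionCount (Fintype.card α - #s) := by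
  have hcard : Fintype.card {x // x ∉ s} = Fintype.card α - #s := by
    simp [Fintype.card_subtype_compl]
  rw [card_involutions_agreeing_on s hσ hσs, involutionCount,
    card_involutions_congr (Fintype.equivFinOfCardEq hcard)]

theorem card_eq_mul_involutionCount_of_fibers {α ι X : Type*} [Fintype α] [DecidableEq α]
    [DecidableEq ι] [DecidableEq X] {k : ℕ} {C : Finset (Perm α × X)} {T : Finset ι}
    (pat : Perm α × X → ι) (s : ι → Finset α) (σ : ι → Perm α) (pos : ι → X)
    (hpat : ∀ q ∈ C, pat q ∈ T) (hσ : ∀ p ∈ T, σ p * σ p = 1)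
    (hσs : ∀ p ∈ T, ∀ x ∉ s p, σ p x = x) (hs : ∀ p ∈ T, #(s p) = k)
    (hfiber : ∀ p ∈ T, ∀ q, q ∈ C ∧ pat q = p ↔
      q.1 * q.1 = 1 ∧ (∀ x ∈ s p, q.1 x = σ p x) ∧ q.2 = pos p) :
    #C = #T * involutionCount (Fintype.card α - k) := by
  rw [card_eq_sum_card_fiberwise hpat]
  refine sum_const_nat fun p hp => ?_
  rw [← hs p hp, ← card_involutions_agreeing_eq_involutionCount (s p) (hσ p hp) (hσs p hp)]
  refine card_nbij' Prod.fst (fun π => (π, pos p)) ?_ ?_ ?_ ?_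
  · intro q hq
    have := (hfiber p hp q).1 (by simpa using hq)
    simpa using ⟨this.1, this.2.1⟩
  · intro π hπ
    simp only [coe_filter, mem_univ, true_and, Set.mem_ofPred_eq] at hπ
    simpa using (hfiber p hp (π, pos p)).2 ⟨hπ.1, hπ.2, rfl⟩
  · intro q hq
    have := (hfiber p hp q).1 (by simpa using hq)
    exact Prod.ext rfl this.2.2.symm
  · intro π _
    rfl

theorem sum_range_choose_eq_choose_succ (n k : ℕ) :
    ∑ i ∈ range n, i.choose k = n.choose (k + 1) := by
  induction n with
  | zero => simp
  | succ n ih => rw [sum_range_succ, ih, Nat.choose_succ_succ', add_comm]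

def sortedTriples (n : ℕ) : Finset (Fin n × Fin n × Fin n) :=
  {x | x.1 < x.2.1 ∧ x.2.1 < x.2.2}

def disjointSortedPairs (n : ℕ) : Finset ((Fin n × Fin n) × (Fin n × Fin n)) :=
  {x | x.1.1 < x.1.2 ∧ x.2.1 < x.2.2 ∧
    x.1.1 ≠ x.2.1 ∧ x.1.1 ≠ x.2.2 ∧ x.1.2 ≠ x.2.1 ∧ x.1.2 ≠ x.2.2}

theorem card_sortedTriples (n : ℕ) : #(sortedTriples n) = n.choose 3 := by
  rw [card_eq_sum_card_fiberwise (f := fun x => x.2.2) (t := univ) fun _ _ => by simp]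
  have hfiber (c : Fin n) :
      #{x ∈ sortedTriples n | x.2.2 = c} = #{y ∈ Iio c ×ˢ Iio c | y.1 < y.2} := by
    refine card_nbij' (fun x => (x.1, x.2.1)) (fun y => (y.1, y.2, c)) ?_ ?_ ?_ ?_
    all_goals intro x; grind [sortedTriples, coe_filter]
  simp only [hfiber, card_product_filter_lt, Fin.card_Iio]
  rw [Fin.sum_univ_eq_sum_range (fun i => i.choose 2), sum_range_choose_eq_choose_succ]

theorem card_disjointSortedPairs (n : ℕ) :
    #(disjointSortedPairs n) = n.choose 2 * (n - 2).choose 2 := by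
  rw [card_eq_sum_card_fiberwise (f := Prod.fst) (t := {p : Fin n × Fin n | p.1 < p.2})
    fun x hx => by grind [disjointSortedPairs, coe_filter]]
  have hfiber (p : Fin n × Fin n) (hp : p ∈ ({p : Fin n × Fin n | p.1 < p.2} : Finset _)) :
      #{x ∈ disjointSortedPairs n | x.1 = p} = (n - 2).choose 2 := by
    simp only [mem_filter, mem_univ, true_and] at hp
    have hcard : #({p.1, p.2}ᶜ : Finset (Fin n)) = n - 2 := by
      rw [card_compl, card_pair hp.ne, Fintype.card_fin]
    rw [← hcard, ← card_product_filter_lt]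
    refine card_nbij' Prod.snd (fun y => (p, y)) ?_ ?_ ?_ ?_
    all_goals intro x; grind [disjointSortedPairs, coe_filter, mem_compl]
  rw [sum_congr rfl hfiber, sum_const, smul_eq_mul, Fintype.card_product_filter_lt,
    Fintype.card_fin]

theorem choose_two_mul_choose_two (n : ℕ) : n.choose 2 * (n - 2).choose 2 = 6 * n.choose 4 := by
  rw [← Nat.choose_mul (by norm_num : 2 ≤ 4), mul_comm]
  rfl

def involutionInversions (n : ℕ) : Finset (Perm (Fin n) × (Fin n × Fin n)) :=
  {q | q.1 * q.1 = 1 ∧ q.2.1 < q.2.2 ∧ q.1 q.2.2 < q.1 q.2.1}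

theorem totalInvInvolution_eq_card (n : ℕ) :
    totalInvInvolution n = #(involutionInversions n) := by
  rw [totalInvInvolution, involutionInversions, card_filter, Fintype.sum_prod_type, sum_filter]
  refine sum_congr rfl fun π _ => ?_
  split_ifs with hπ <;>
    simp only [hπ, invNum, card_filter, Fintype.sum_prod_type, true_and, false_and, if_false,
      sum_const_zero]

theorem card_involutionInversions_eq_add (n : ℕ) :
    #(involutionInversions n) =
      #{q ∈ involutionInversions n | q.1 q.2.1 = q.2.2} +
      #{q ∈ involutionInversions n | q.1 q.2.1 = q.2.1} +
      #{q ∈ involutionInversions n | q.1 q.2.2 = q.2.2} +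
      #{q ∈ involutionInversions n |
        q.1 q.2.1 ≠ q.2.2 ∧ q.1 q.2.1 ≠ q.2.1 ∧ q.1 q.2.2 ≠ q.2.2} := by
  rw [card_filter, card_filter, card_filter, card_filter, ← sum_add_distrib, ← sum_add_distrib,
    ← sum_add_distrib, card_eq_sum_ones]
  refine sum_congr rfl fun q hq => ?_
  simp only [involutionInversions, mem_filter, mem_univ, true_and] at hq
  split_ifs <;> grind

theorem card_involutionInversions_swapped (n : ℕ) :
    #{q ∈ involutionInversions n | q.1 q.2.1 = q.2.2} = n.choose 2 * involutionCount (n - 2) := by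
  rw [card_eq_mul_involutionCount_of_fibers (T := {p : Fin n × Fin n | p.1 < p.2}) (k := 2)
    Prod.snd (fun p => {p.1, p.2}) (fun p => swap p.1 p.2) id, Fintype.card_product_filter_lt,
    Fintype.card_fin]
  · intro q hq
    simp only [involutionInversions, mem_filter, mem_univ, true_and] at hq ⊢
    exact hq.1.2.1
  · exact fun p _ => swap_mul_self _ _
  · intro p _ x hx
    simp only [mem_insert, mem_singleton, not_or] at hx
    exact swap_apply_of_ne_of_ne hx.1 hx.2
  · intro p hp
    simp only [mem_filter, mem_univ, true_and] at hp
    exact card_pair hp.ne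
  · rintro ⟨a, b⟩ hab ⟨π, i, j⟩
    simp only [mem_filter, mem_univ, true_and] at hab
    simp only [involutionInversions, mem_filter, mem_univ, true_and, Perm.mul_self_eq_one_iff,
      mem_insert, mem_singleton, forall_eq_or_imp, forall_eq, swap_apply_left, swap_apply_right,
      id, Prod.mk.injEq]
    grind

theorem card_eq_mul_involutionCount_of_sortedTriples {X : Type*} [DecidableEq X] {n : ℕ}
    {C : Finset (Perm (Fin n) × X)} (pat : Perm (Fin n) × X → Fin n × Fin n × Fin n)
    (pos : Fin n × Fin n × Fin n → X) (hpat : ∀ q ∈ C, pat q ∈ sortedTriples n)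
    (hfiber : ∀ p ∈ sortedTriples n, ∀ q, q ∈ C ∧ pat q = p ↔
      q.1 * q.1 = 1 ∧ (∀ x ∈ ({p.1, p.2.1, p.2.2} : Finset _), q.1 x = swap p.1 p.2.2 x) ∧
        q.2 = pos p) :
    #C = n.choose 3 * involutionCount (n - 3) := by
  rw [card_eq_mul_involutionCount_of_fibers (k := 3) pat _ _ pos hpat _ _ _ hfiber,
    card_sortedTriples, Fintype.card_fin]
  · exact fun p _ => swap_mul_self _ _
  · intro p _ x hx
    simp only [mem_insert, mem_singleton, not_or] at hx
    exact swap_apply_of_ne_of_ne hx.1 hx.2.2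
  · intro p hp
    simp only [sortedTriples, mem_filter, mem_univ, true_and] at hp
    grind [card_eq_three]

theorem card_involutionInversions_fixed_left (n : ℕ) :
    #{q ∈ involutionInversions n | q.1 q.2.1 = q.2.1} = n.choose 3 * involutionCount (n - 3) := by
  refine card_eq_mul_involutionCount_of_sortedTriples (fun q => (q.1 q.2.2, q.2)) Prod.snd ?_ ?_
  · intro q hq
    simp only [involutionInversions, sortedTriples, mem_filter, mem_univ, true_and] at hq ⊢
    grind
  · rintro ⟨a, b, c⟩ habc ⟨π, i, j⟩
    simp only [sortedTriples, mem_filter, mem_univ, true_and] at habc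
    simp only [involutionInversions, mem_filter, mem_univ, true_and, Perm.mul_self_eq_one_iff,
      mem_insert, mem_singleton, forall_eq_or_imp, forall_eq, swap_apply_def, Prod.mk.injEq]
    grind

theorem card_involutionInversions_fixed_right (n : ℕ) :
    #{q ∈ involutionInversions n | q.1 q.2.2 = q.2.2} = n.choose 3 * involutionCount (n - 3) := by
  refine card_eq_mul_involutionCount_of_sortedTriples (fun q => (q.2.1, q.2.2, q.1 q.2.1))
    (fun x => (x.1, x.2.1)) ?_ ?_
  · intro q hq
    simp only [involutionInversions, sortedTriples, mem_filter, mem_univ, true_and] at hq ⊢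
    grind
  · rintro ⟨a, b, c⟩ habc ⟨π, i, j⟩
    simp only [sortedTriples, mem_filter, mem_univ, true_and] at habc
    simp only [involutionInversions, mem_filter, mem_univ, true_and, Perm.mul_self_eq_one_iff,
      mem_insert, mem_singleton, forall_eq_or_imp, forall_eq, swap_apply_def, Prod.mk.injEq]
    grind

theorem card_involutionInversions_four_points (n : ℕ) :
    #{q ∈ involutionInversions n |
        q.1 q.2.1 ≠ q.2.2 ∧ q.1 q.2.1 ≠ q.2.1 ∧ q.1 q.2.2 ≠ q.2.2} =
      n.choose 2 * (n - 2).choose 2 * involutionCount (n - 4) := by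
  rw [card_eq_mul_involutionCount_of_fibers (T := disjointSortedPairs n) (k := 4)
    (fun q => (q.2, q.1 q.2.2, q.1 q.2.1)) (fun x => {x.1.1, x.1.2, x.2.1, x.2.2})
    (fun x => swap x.1.1 x.2.2 * swap x.1.2 x.2.1) Prod.fst, card_disjointSortedPairs,
    Fintype.card_fin]
  · intro q hq
    simp only [involutionInversions, disjointSortedPairs, mem_filter, mem_univ, true_and,
      Perm.mul_self_eq_one_iff] at hq ⊢
    grind
  · intro p hp
    simp only [disjointSortedPairs, mem_filter, mem_univ, true_and] at hp
    ext x
    simp only [Perm.mul_apply, swap_apply_def, Perm.one_apply]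
    grind
  · intro p _ x hx
    simp only [mem_insert, mem_singleton, not_or] at hx
    simp only [Perm.mul_apply, swap_apply_def]
    grind
  · intro p hp
    simp only [disjointSortedPairs, mem_filter, mem_univ, true_and] at hp
    grind [card_insert_of_notMem, card_pair]
  · rintro ⟨⟨a, b⟩, c, d⟩ habcd ⟨π, i, j⟩
    simp only [disjointSortedPairs, mem_filter, mem_univ, true_and] at habcd
    simp only [involutionInversions, mem_filter, mem_univ, true_and, Perm.mul_self_eq_one_iff,
      mem_insert, mem_singleton, forall_eq_or_imp, forall_eq, Perm.mul_apply, swap_apply_def,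
      Prod.mk.injEq]
    grind

theorem totalInvInvolution_formula_general (n : ℕ) :
    totalInvInvolution n =
      n.choose 2 * involutionCount (n - 2) + 2 * n.choose 3 * involutionCount (n - 3) +
        6 * n.choose 4 * involutionCount (n - 4) := by
  rw [totalInvInvolution_eq_card, card_involutionInversions_eq_add,
    card_involutionInversions_swapped, card_involutionInversions_fixed_left,
    card_involutionInversions_fixed_right, card_involutionInversions_four_points,
    choose_two_mul_choose_two]
  ring

/-- `i_n = C(n,2)·r_{n−2} + 2·C(n,3)·r_{n−3} + 6·C(n,4)·r_{n−4}` for `n ≥ 4`. -/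
theorem totalInvInvolution_formula (n : ℕ) (hn : 4 ≤ n) :
    totalInvInvolution n =
      n.choose 2 * involutionCount (n - 2) + 2 * n.choose 3 * involutionCount (n - 3) +
        6 * n.choose 4 * involutionCount (n - 4) :=
  totalInvInvolution_formula_general n
end
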